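/- arXiv:1212.0054 — 13 statements merged into one kernel-verified Lean document; each statement's English description precedes it below -/
import Mathlib

section
/- Let X be a real normed space, 1 ≤ p < ∞, and let x, y ∈ X with x ⊥_p y, meaning ‖x + k·y‖^p = ‖x‖^p + ‖k·y‖^p for all k ∈ ℝ. If x₁, …, xₙ are pairwise p-orthogonal nonzero elements of X, then for all scalars α₁, …, αₙ we have ‖∑ αₖ xₖ‖^p = ∑ ‖αₖ xₖ‖^p. -/
/-- `x ⊥_p y`: `‖x + k • y‖ ^ p = ‖x‖ ^ p + ‖k • y‖ ^ p` for all `k : ℝ`. -/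
def PerpP {X : Type*} [NormedAddCommGroup X] [NormedSpace ℝ X] (p : ℝ) (x y : X) : Prop :=
  ∀ k : ℝ, ‖x + k • y‖ ^ p = ‖x‖ ^ p + ‖k • y‖ ^ p

namespace PerpP

variable {X : Type*} [NormedAddCommGroup X] [NormedSpace ℝ X] {p : ℝ}

lemma smul_right {x y : X} (h : PerpP p x y) (c : ℝ) : PerpP p x (c • y) := by
  intro k
  rw [smul_smul]
  exact h (k * c)

lemma zero_right (hp : p ≠ 0) (x : X) : PerpP p x 0 := by
  intro k
  simp [Real.zero_rpow hp]

lemma sum_right {ι : Type*} {x : X} {y : ι → X} (s : Finset ι) (hp : p ≠ 0)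
    (hadd : ∀ b c : X, PerpP p x b → PerpP p x c → PerpP p x (b + c))
    (h : ∀ i ∈ s, PerpP p x (y i)) : PerpP p x (∑ i ∈ s, y i) :=
  Finset.sum_induction y (PerpP p x) hadd (zero_right hp x) h

lemma norm_smul_rpow (a : ℝ) (v : X) : ‖a • v‖ ^ p = |a| ^ p * ‖v‖ ^ p := by
  rw [norm_smul, Real.norm_eq_abs, Real.mul_rpow (abs_nonneg a) (norm_nonneg v)]

lemma norm_smul_add_rpow {x y : X} (hp : p ≠ 0) (h : PerpP p x y) (a : ℝ) :
    ‖a • x + y‖ ^ p = ‖a • x‖ ^ p + ‖y‖ ^ p := by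
  rcases eq_or_ne a 0 with rfl | ha
  · simp [Real.zero_rpow hp]
  calc ‖a • x + y‖ ^ p = ‖a • (x + a⁻¹ • y)‖ ^ p := by rw [smul_add, smul_inv_smul₀ ha]
    _ = |a| ^ p * (‖x‖ ^ p + ‖a⁻¹ • y‖ ^ p) := by rw [norm_smul_rpow, h]
    _ = ‖a • x‖ ^ p + ‖a • a⁻¹ • y‖ ^ p := by rw [mul_add, ← norm_smul_rpow, ← norm_smul_rpow]
    _ = ‖a • x‖ ^ p + ‖y‖ ^ p := by rw [smul_inv_smul₀ ha]

theorem norm_sum_smul_rpow {ι : Type*} [DecidableEq ι] (s : Finset ι) (hp : p ≠ 0)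
    {x : ι → X} (horth : (s : Set ι).Pairwise fun i j => PerpP p (x i) (x j))
    (hadd : ∀ a b c : X, PerpP p a b → PerpP p a c → PerpP p a (b + c)) (α : ι → ℝ) :
    ‖∑ i ∈ s, α i • x i‖ ^ p = ∑ i ∈ s, ‖α i • x i‖ ^ p := by
  induction s using Finset.induction_on with
  | empty => simp [Real.zero_rpow hp]
  | insert j s hj ih =>
    have hperp : PerpP p (x j) (∑ i ∈ s, α i • x i) :=
      sum_right s hp (hadd (x j)) fun i hi =>
        (horth (by simp) (by simp [hi]) (ne_of_mem_of_not_mem hi hj).symm).smul_right (α i)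
    rw [Finset.sum_insert hj, Finset.sum_insert hj, norm_smul_add_rpow hp hperp,
      ih (horth.mono (by simp))]

end PerpP

theorem stmt0_general {X : Type*} [NormedAddCommGroup X] [NormedSpace ℝ X]
    (p : ℝ) (hp : 1 ≤ p) (n : ℕ) (x : Fin n → X)
    (horth : ∀ i j, i ≠ j → PerpP p (x i) (x j))
    (hadd : ∀ a b c : X, PerpP p a b → PerpP p a c → PerpP p a (b + c))
    (α : Fin n → ℝ) :
    ‖∑ i, α i • x i‖ ^ p = ∑ i, ‖α i • x i‖ ^ p :=
  PerpP.norm_sum_smul_rpow Finset.univ (by linarith) (fun i _ j _ hij => horth i j hij) hadd α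

theorem stmt0 {X : Type*} [NormedAddCommGroup X] [NormedSpace ℝ X]
    (p : ℝ) (hp : 1 ≤ p) (n : ℕ) (x : Fin n → X)
    (hx : ∀ i, x i ≠ 0)
    (horth : ∀ i j, i ≠ j → PerpP p (x i) (x j))
    (hadd : ∀ a b c : X, PerpP p a b → PerpP p a c → PerpP p a (b + c))
    (α : Fin n → ℝ) :
    ‖∑ i, α i • x i‖ ^ p = ∑ i, ‖α i • x i‖ ^ p :=
  stmt0_general p hp n x horth hadd α
end

section
/- Let X be a real normed space and let x, y ∈ X with x ⊥_∞ y, meaning ‖x + k·y‖ = max(‖x‖, ‖k·y‖) for all k ∈ ℝ. If x₁, …, xₙ are pairwise ∞-orthogonal nonzero elements of X and ⊥_∞ is additive on X, then for all scalars α₁, …, αₙ we have ‖∑ αₖ xₖ‖ = max over k of ‖αₖ xₖ‖. -/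
/-!
Additivity together with homogeneity (`a ⊥_∞ b → a ⊥_∞ c • b`) makes each vector orthogonal to
every linear combination of vectors it is orthogonal to. Peeling off one term at a time, the norm
of a sum of pairwise orthogonal vectors is the maximum of the norm of that term and the norm of
the remaining sum, which by induction is the maximum of all the norms.
-/

/-- `x ⊥_∞ y`: `‖x + k • y‖ = max ‖x‖ ‖k • y‖` for all `k : ℝ`. -/
def PerpInf {X : Type*} [NormedAddCommGroup X] [NormedSpace ℝ X] (x y : X) : Prop :=
  ∀ k : ℝ, ‖x + k • y‖ = max ‖x‖ ‖k • y‖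

namespace PerpInf

variable {X : Type*} [NormedAddCommGroup X] [NormedSpace ℝ X] {a b : X}

theorem norm_add (h : PerpInf a b) : ‖a + b‖ = max ‖a‖ ‖b‖ := by
  simpa using h 1

theorem zero_right (a : X) : PerpInf a 0 := by
  intro k
  simp

theorem smul_right (h : PerpInf a b) (c : ℝ) : PerpInf a (c • b) := by
  intro k
  rw [smul_smul]
  exact h (k * c)

theorem symm (h : PerpInf a b) : PerpInf b a := by
  intro k
  rcases eq_or_ne k 0 with rfl | hk
  · simp
  · have hk' : ‖k‖ ≠ 0 := norm_ne_zero_iff.mpr hk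
    calc ‖b + k • a‖ = ‖k‖ * ‖a + k⁻¹ • b‖ := by
          rw [← norm_smul, smul_add, smul_smul, mul_inv_cancel₀ hk, one_smul, add_comm]
      _ = ‖k‖ * max ‖a‖ (‖k‖⁻¹ * ‖b‖) := by rw [h, norm_smul, norm_inv]
      _ = max ‖b‖ ‖k • a‖ := by
          rw [mul_max_of_nonneg _ _ (norm_nonneg k), mul_inv_cancel_left₀ hk', norm_smul, max_comm]

theorem smul_left (h : PerpInf a b) (c : ℝ) : PerpInf (c • a) b :=
  (h.symm.smul_right c).symm

theorem sum_right (hadd : ∀ a b c : X, PerpInf a b → PerpInf a c → PerpInf a (b + c))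
    {ι : Type*} {s : Finset ι} {f : ι → X} (h : ∀ i ∈ s, PerpInf a (f i)) :
    PerpInf a (∑ i ∈ s, f i) := by
  induction s using Finset.cons_induction with
  | empty => simpa using zero_right a
  | cons i s hi ih =>
    rw [Finset.sum_cons]
    exact hadd _ _ _ (h i (Finset.mem_cons_self i s))
      (ih fun j hj => h j (Finset.mem_cons_of_mem hj))

end PerpInf

theorem norm_sum_eq_sup'_of_pairwise_perpInf {X : Type*} [NormedAddCommGroup X]
    [NormedSpace ℝ X] (hadd : ∀ a b c : X, PerpInf a b → PerpInf a c → PerpInf a (b + c))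
    {ι : Type*} {s : Finset ι} (hs : s.Nonempty) {f : ι → X}
    (hf : (s : Set ι).Pairwise fun i j => PerpInf (f i) (f j)) :
    ‖∑ i ∈ s, f i‖ = s.sup' hs fun i => ‖f i‖ := by
  induction hs using Finset.Nonempty.cons_induction with
  | singleton i => simp
  | cons i s hi hs ih =>
    have hperp : PerpInf (f i) (∑ j ∈ s, f j) :=
      PerpInf.sum_right hadd fun j hj =>
        hf (Finset.mem_cons_self i s) (Finset.mem_cons_of_mem hj) (ne_of_mem_of_not_mem hj hi).symm
    rw [Finset.sum_cons, hperp.norm_add, Finset.sup'_cons hs,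
      ih (hf.mono fun j hj => Finset.mem_cons_of_mem hj)]

theorem stmt1_general {X : Type*} [NormedAddCommGroup X] [NormedSpace ℝ X]
    (n : ℕ) (x : Fin (n + 1) → X)
    (horth : ∀ i j, i ≠ j → PerpInf (x i) (x j))
    (hadd : ∀ a b c : X, PerpInf a b → PerpInf a c → PerpInf a (b + c))
    (α : Fin (n + 1) → ℝ) :
    ‖∑ i, α i • x i‖ = Finset.univ.sup' Finset.univ_nonempty (fun i => ‖α i • x i‖) :=
  norm_sum_eq_sup'_of_pairwise_perpInf hadd Finset.univ_nonempty
    fun i _ j _ hij => ((horth i j hij).smul_left (α i)).smul_right (α j)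

theorem stmt1 {X : Type*} [NormedAddCommGroup X] [NormedSpace ℝ X]
    (n : ℕ) (x : Fin (n + 1) → X)
    (hx : ∀ i, x i ≠ 0)
    (horth : ∀ i j, i ≠ j → PerpInf (x i) (x j))
    (hadd : ∀ a b c : X, PerpInf a b → PerpInf a c → PerpInf a (b + c))
    (α : Fin (n + 1) → ℝ) :
    ‖∑ i, α i • x i‖ = Finset.univ.sup' Finset.univ_nonempty (fun i => ‖α i • x i‖) :=
  stmt1_general n x horth hadd α
end

section
/- Any p-orthogonal set in a real normed space X (with ⊥_p additive on X), 1 ≤ p < ∞, is linearly independent. -/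
/-!
If `x ∈ S` were a linear combination of the other elements of `S`, then additivity and
homogeneity of `⊥_p` in the second argument would give `x ⊥_p x`; taking `k = -1` in the
definition yields `0 = 2 ‖x‖ ^ p`, so `x = 0 ∉ S`.
-/

section PerpP

variable {X : Type*} [NormedAddCommGroup X] [NormedSpace ℝ X] {p : ℝ}

lemma PerpP.exponent_ne_zero {x y : X} (h : PerpP p x y) : p ≠ 0 := by
  intro hp
  simpa [hp] using h 0

lemma PerpP.eq_zero_of_self {x : X} (h : PerpP p x x) : x = 0 := by
  have hp := h.exponent_ne_zero
  have h₁ := h (-1)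
  rw [neg_one_smul, add_neg_cancel, norm_zero, norm_neg, Real.zero_rpow hp] at h₁
  have hx : ‖x‖ ^ p = 0 := by linarith
  exact norm_eq_zero.mp ((Real.rpow_eq_zero_iff_of_nonneg (norm_nonneg x)).mp hx).1

lemma perpP_zero_right (hp : p ≠ 0) (x : X) : PerpP p x 0 := by
  intro k
  simp [Real.zero_rpow hp]

lemma PerpP.smul_right_s2 {x y : X} (h : PerpP p x y) (c : ℝ) : PerpP p x (c • y) := by
  intro k
  rw [smul_smul]
  exact h (k * c)

lemma perpP_of_mem_span (hp : p ≠ 0) {x : X}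
    (hadd : ∀ b c : X, PerpP p x b → PerpP p x c → PerpP p x (b + c))
    {s : Set X} (hs : ∀ y ∈ s, PerpP p x y) {y : X} (hy : y ∈ Submodule.span ℝ s) :
    PerpP p x y := by
  induction hy using Submodule.span_induction with
  | mem y hy => exact hs y hy
  | zero => exact perpP_zero_right hp x
  | add b c _ _ hb hc => exact hadd b c hb hc
  | smul c y _ hy => exact hy.smul_right_s2 c

end PerpP

theorem stmt2 {X : Type*} [NormedAddCommGroup X] [NormedSpace ℝ X]
    (p : ℝ) (hp : 1 ≤ p) (S : Set X)
    (h0 : (0 : X) ∉ S)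
    (horth : ∀ x ∈ S, ∀ y ∈ S, x ≠ y → PerpP p x y)
    (hadd : ∀ a b c : X, PerpP p a b → PerpP p a c → PerpP p a (b + c)) :
    LinearIndependent ℝ (fun s : S => (s : X)) := by
  change LinearIndepOn ℝ id S
  rw [linearIndepOn_iff_notMem_span]
  intro x hx hspan
  rw [Set.image_id] at hspan
  have hxx : PerpP p x x :=
    perpP_of_mem_span (by positivity) (hadd x)
      (fun y hy => horth x hx y hy.1 fun hxy => hy.2 hxy.symm) hspan
  exact h0 (hxx.eq_zero_of_self ▸ hx)
end

section
/- Let V be an ordered normed space satisfying condition (O.p.1) for 1 ≤ p < ∞: u ≤ v ≤ w implies ‖v‖ ≤ (‖u‖^p + ‖w‖^p)^{1/p}. If u₁, u₂ ∈ V⁺ with u₁ ⊥_p u₂ and u₁ − u₂ ∈ V⁺, then u₂ = 0. -/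
/-! Apply (O.p.1) to `-u₁ ≤ u₂ - u₁ ≤ 0` to get `‖u₁ - u₂‖ ^ p ≤ ‖u₁‖ ^ p`, while `⊥_p` at
`k = -1` gives `‖u₁ - u₂‖ ^ p = ‖u₁‖ ^ p + ‖u₂‖ ^ p`; hence `‖u₂‖ ^ p ≤ 0`. -/

theorem PerpP.norm_sub_rpow {X : Type*} [NormedAddCommGroup X] [NormedSpace ℝ X] {p : ℝ}
    {x y : X} (h : PerpP p x y) : ‖x - y‖ ^ p = ‖x‖ ^ p + ‖y‖ ^ p := by
  simpa [sub_eq_add_neg] using h (-1)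

theorem norm_sub_rpow_le_of_mem {V : Type*} [NormedAddCommGroup V] (C : Set V) {p : ℝ}
    (hp : p ≠ 0)
    (hOp1 : ∀ u v w : V, v - u ∈ C → w - v ∈ C → ‖v‖ ^ p ≤ ‖u‖ ^ p + ‖w‖ ^ p)
    {x y : V} (hy : y ∈ C) (hxy : x - y ∈ C) : ‖x - y‖ ^ p ≤ ‖x‖ ^ p := by
  have h := hOp1 (-x) (y - x) 0 (by simpa using hy) (by simpa using hxy)
  rwa [norm_sub_rev, norm_neg, norm_zero, Real.zero_rpow hp, add_zero] at h

theorem stmt7_general {V : Type*} [NormedAddCommGroup V] [NormedSpace ℝ V] (C : Set V)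
    (p : ℝ) (hp : 1 ≤ p)
    -- (O.p.1): `u ≤ v ≤ w` implies `‖v‖ ≤ (‖u‖ ^ p + ‖w‖ ^ p) ^ (1/p)`:
    (hOp1 : ∀ u v w : V, v - u ∈ C → w - v ∈ C → ‖v‖ ^ p ≤ ‖u‖ ^ p + ‖w‖ ^ p)
    (u₁ u₂ : V) (hu₂ : u₂ ∈ C)
    (hperp : PerpP p u₁ u₂) (hdiff : u₁ - u₂ ∈ C) :
    u₂ = 0 := by
  have hp0 : 0 < p := by linarith
  have hle := norm_sub_rpow_le_of_mem C hp0.ne' hOp1 hu₂ hdiff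
  rw [hperp.norm_sub_rpow] at hle
  by_contra hne
  have hpos : 0 < ‖u₂‖ ^ p := Real.rpow_pos_of_pos (norm_pos_iff.mpr hne) p
  linarith

theorem stmt7 {V : Type*} [NormedAddCommGroup V] [NormedSpace ℝ V] (C : Set V)
    -- `C` is a norm-closed, proper, generating cone:
    (hCadd : ∀ x ∈ C, ∀ y ∈ C, x + y ∈ C)
    (hCsmul : ∀ x ∈ C, ∀ r : ℝ, 0 ≤ r → r • x ∈ C)
    (hCproper : ∀ x, x ∈ C → -x ∈ C → x = 0)
    (hCgen : ∀ x : V, ∃ y ∈ C, ∃ z ∈ C, x = y - z)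
    (hCclosed : IsClosed C)
    (p : ℝ) (hp : 1 ≤ p)
    -- (O.p.1): `u ≤ v ≤ w` implies `‖v‖ ≤ (‖u‖ ^ p + ‖w‖ ^ p) ^ (1/p)`:
    (hOp1 : ∀ u v w : V, v - u ∈ C → w - v ∈ C → ‖v‖ ^ p ≤ ‖u‖ ^ p + ‖w‖ ^ p)
    (u₁ u₂ : V) (hu₁ : u₁ ∈ C) (hu₂ : u₂ ∈ C)
    (hperp : PerpP p u₁ u₂) (hdiff : u₁ - u₂ ∈ C) :
    u₂ = 0 :=
  stmt7_general C p hp hOp1 u₁ u₂ hu₂ hperp hdiff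
end

section
/- Let V be an order smooth ∞-normed space and u₁, u₂ ∈ V⁺ \ {0}. If ‖ ‖u₁‖⁻¹u₁ + ‖u₂‖⁻¹u₂ ‖ = 1, then u₁ ⊥_∞ u₂, i.e., ‖u₁ + k·u₂‖ = max(‖u₁‖, ‖k·u₂‖) for all k ∈ ℝ. -/
/-- A convex cone `C` whose order satisfies (O.∞.1). -/
structure IsInftyNormedCone {V : Type*} [NormedAddCommGroup V] [NormedSpace ℝ V] (C : Set V) :
    Prop where
  add_mem : ∀ x ∈ C, ∀ y ∈ C, x + y ∈ C
  smul_mem : ∀ x ∈ C, ∀ r : ℝ, 0 ≤ r → r • x ∈ C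
  norm_le_max : ∀ u v w : V, v - u ∈ C → w - v ∈ C → ‖v‖ ≤ max ‖u‖ ‖w‖

section

variable {V : Type*} [NormedAddCommGroup V] [NormedSpace ℝ V]

theorem le_norm_smul_sub_smul_of_norm_add_eq_one {x y : V} (hx : ‖x‖ = 1)
    (hxy : ‖x + y‖ = 1) {α t : ℝ} (hα : 0 ≤ α) (ht : 0 ≤ t) : α ≤ ‖α • x - t • y‖ := by
  have hsplit : α • x - t • y = (α + t) • x - t • (x + y) := by module
  calc α = ‖(α + t) • x‖ - ‖t • (x + y)‖ := by
        rw [norm_smul, norm_smul, hx, hxy, Real.norm_of_nonneg (by positivity),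
          Real.norm_of_nonneg ht]
        ring
    _ ≤ ‖α • x - t • y‖ := hsplit ▸ norm_sub_norm_le _ _

namespace IsInftyNormedCone

variable {C : Set V}

theorem norm_le_norm (hC : IsInftyNormedCone C) {v w : V} (hv : v ∈ C) (hvw : w - v ∈ C) :
    ‖v‖ ≤ ‖w‖ := by
  simpa using hC.norm_le_max 0 v w (by simpa using hv) hvw

variable {x y : V}

theorem norm_smul_add_smul_of_nonneg (hC : IsInftyNormedCone C) (hxC : x ∈ C) (hyC : y ∈ C)
    (hx : ‖x‖ = 1) (hy : ‖y‖ = 1) (hxy : ‖x + y‖ = 1) {α β : ℝ} (hα : 0 ≤ α) (hβ : 0 ≤ β) :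
    ‖α • x + β • y‖ = max α β := by
  have hαx : α • x ∈ C := hC.smul_mem x hxC α hα
  have hβy : β • y ∈ C := hC.smul_mem y hyC β hβ
  have hsum : α • x + β • y ∈ C := hC.add_mem _ hαx _ hβy
  set M := max α β
  have hM : 0 ≤ M := le_max_of_le_left hα
  have hupper : ‖α • x + β • y‖ ≤ ‖M • (x + y)‖ := by
    refine hC.norm_le_norm hsum ?_
    have : M • (x + y) - (α • x + β • y) = (M - α) • x + (M - β) • y := by module
    rw [this]
    exact hC.add_mem _ (hC.smul_mem x hxC _ (by simp [M])) _
      (hC.smul_mem y hyC _ (by simp [M]))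
  have hleft : ‖α • x‖ ≤ ‖α • x + β • y‖ := hC.norm_le_norm hαx (by simpa using hβy)
  have hright : ‖β • y‖ ≤ ‖α • x + β • y‖ := hC.norm_le_norm hβy (by simpa using hαx)
  rw [norm_smul, hxy, Real.norm_of_nonneg hM, mul_one] at hupper
  rw [norm_smul, hx, Real.norm_of_nonneg hα, mul_one] at hleft
  rw [norm_smul, hy, Real.norm_of_nonneg hβ, mul_one] at hright
  exact le_antisymm hupper (max_le hleft hright)

theorem norm_smul_sub_smul_of_nonneg (hC : IsInftyNormedCone C) (hxC : x ∈ C) (hyC : y ∈ C)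
    (hx : ‖x‖ = 1) (hy : ‖y‖ = 1) (hxy : ‖x + y‖ = 1) {α t : ℝ} (hα : 0 ≤ α) (ht : 0 ≤ t) :
    ‖α • x - t • y‖ = max α t := by
  have hupper : ‖α • x - t • y‖ ≤ max ‖-(t • y)‖ ‖α • x‖ :=
    hC.norm_le_max _ _ _ (by simpa using hC.smul_mem x hxC α hα)
      (by simpa using hC.smul_mem y hyC t ht)
  rw [norm_neg, norm_smul, norm_smul, hx, hy, Real.norm_of_nonneg hα, Real.norm_of_nonneg ht,
    mul_one, mul_one, max_comm] at hupper
  have hright : t ≤ ‖α • x - t • y‖ := by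
    rw [← norm_neg, neg_sub]
    exact le_norm_smul_sub_smul_of_norm_add_eq_one hy (add_comm x y ▸ hxy) ht hα
  have hleft : α ≤ ‖α • x - t • y‖ := le_norm_smul_sub_smul_of_norm_add_eq_one hx hxy hα ht
  exact le_antisymm hupper (max_le hleft hright)

theorem norm_smul_add_smul (hC : IsInftyNormedCone C) (hxC : x ∈ C) (hyC : y ∈ C)
    (hx : ‖x‖ = 1) (hy : ‖y‖ = 1) (hxy : ‖x + y‖ = 1) {α : ℝ} (hα : 0 ≤ α) (β : ℝ) :
    ‖α • x + β • y‖ = max α |β| := by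
  rcases le_or_gt 0 β with hβ | hβ
  · rw [abs_of_nonneg hβ]
    exact hC.norm_smul_add_smul_of_nonneg hxC hyC hx hy hxy hα hβ
  · have := hC.norm_smul_sub_smul_of_nonneg hxC hyC hx hy hxy hα (neg_nonneg.mpr hβ.le)
    rwa [neg_smul, sub_neg_eq_add, ← abs_of_neg hβ] at this

end IsInftyNormedCone

end

theorem stmt10_general {V : Type*} [NormedAddCommGroup V] [NormedSpace ℝ V] (C : Set V)
    -- `C` is a norm-closed, proper, generating cone:
    (hCadd : ∀ x ∈ C, ∀ y ∈ C, x + y ∈ C)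
    (hCsmul : ∀ x ∈ C, ∀ r : ℝ, 0 ≤ r → r • x ∈ C)
    -- (O.∞.1):
    (hO1 : ∀ u v w : V, v - u ∈ C → w - v ∈ C → ‖v‖ ≤ max ‖u‖ ‖w‖)
    (u₁ u₂ : V) (hu₁ : u₁ ∈ C) (hu₂ : u₂ ∈ C) (hn₁ : u₁ ≠ 0) (hn₂ : u₂ ≠ 0)
    (h : ‖‖u₁‖⁻¹ • u₁ + ‖u₂‖⁻¹ • u₂‖ = 1) :
    PerpInf u₁ u₂ := by
  have hC : IsInftyNormedCone C := ⟨hCadd, hCsmul, hO1⟩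
  have ha : ‖u₁‖ ≠ 0 := norm_ne_zero_iff.mpr hn₁
  have hb : ‖u₂‖ ≠ 0 := norm_ne_zero_iff.mpr hn₂
  have hunit {u : V} (hu : ‖u‖ ≠ 0) : ‖‖u‖⁻¹ • u‖ = 1 := by
    rw [norm_smul, norm_inv, norm_norm, inv_mul_cancel₀ hu]
  intro k
  have hsplit : u₁ + k • u₂ = ‖u₁‖ • (‖u₁‖⁻¹ • u₁) + (k * ‖u₂‖) • (‖u₂‖⁻¹ • u₂) := by
    rw [smul_smul, smul_smul, mul_inv_cancel₀ ha, mul_assoc, mul_inv_cancel₀ hb, one_smul,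
      mul_one]
  rw [hsplit, hC.norm_smul_add_smul (hC.smul_mem _ hu₁ _ (by positivity))
    (hC.smul_mem _ hu₂ _ (by positivity)) (hunit ha) (hunit hb) h
    (norm_nonneg _), norm_smul, Real.norm_eq_abs, abs_mul, abs_norm]

theorem stmt10 {V : Type*} [NormedAddCommGroup V] [NormedSpace ℝ V] (C : Set V)
    -- `C` is a norm-closed, proper, generating cone:
    (hCadd : ∀ x ∈ C, ∀ y ∈ C, x + y ∈ C)
    (hCsmul : ∀ x ∈ C, ∀ r : ℝ, 0 ≤ r → r • x ∈ C)
    (hCproper : ∀ x, x ∈ C → -x ∈ C → x = 0)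
    (hCgen : ∀ x : V, ∃ y ∈ C, ∃ z ∈ C, x = y - z)
    (hCclosed : IsClosed C)
    -- (O.∞.1):
    (hO1 : ∀ u v w : V, v - u ∈ C → w - v ∈ C → ‖v‖ ≤ max ‖u‖ ‖w‖)
    -- (O.∞.2):
    (hO2 : ∀ v : V, ∀ ε : ℝ, 0 < ε → ∃ u₁ ∈ C, ∃ u₂ ∈ C,
      v = u₁ - u₂ ∧ max ‖u₁‖ ‖u₂‖ ≤ ‖v‖ + ε)
    (u₁ u₂ : V) (hu₁ : u₁ ∈ C) (hu₂ : u₂ ∈ C) (hn₁ : u₁ ≠ 0) (hn₂ : u₂ ≠ 0)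
    (h : ‖‖u₁‖⁻¹ • u₁ + ‖u₂‖⁻¹ • u₂‖ = 1) :
    PerpInf u₁ u₂ :=
  stmt10_general C hCadd hCsmul hO1 u₁ u₂ hu₁ hu₂ hn₁ hn₂ h
end

section
/- Let V be an order smooth ∞-normed space and u₁, u₂ ∈ V⁺ \ {0} with u₁ ⊥_∞ u₂. Let f_i ∈ V'⁺ with ‖f_i‖ = 1 and f_i(u_i) = ‖u_i‖ (i = 1,2). Then f₁(u₂) = 0 = f₂(u₁), and the restrictions g_i of f_i to the span W of {u₁, u₂} satisfy ‖α₁g₁ + α₂g₂‖_{W'} = |α₁| + |α₂| for all real α₁, α₂; in particular g₁ ⊥_1 g₂. -/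
/-- `f ⊥_1 g`: `‖f + k • g‖ = ‖f‖ + ‖k • g‖` for all `k : ℝ`. -/
def PerpOne {X : Type*} [NormedAddCommGroup X] [NormedSpace ℝ X] (x y : X) : Prop :=
  ∀ k : ℝ, ‖x + k • y‖ = ‖x‖ + ‖k • y‖

namespace PerpInf

variable {X : Type*} [NormedAddCommGroup X] [NormedSpace ℝ X] {x y : X}

theorem norm_smul_add_smul (h : PerpInf x y) (a b : ℝ) :
    ‖a • x + b • y‖ = max (|a| * ‖x‖) (|b| * ‖y‖) := by
  rcases eq_or_ne a 0 with rfl | ha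
  · simp only [zero_smul, zero_add, norm_smul, Real.norm_eq_abs, abs_zero, zero_mul]
    exact (max_eq_right (by positivity)).symm
  have hsplit : a • x + b • y = a • (x + (b / a) • y) := by
    rw [smul_add, smul_smul, mul_div_cancel₀ _ ha]
  rw [hsplit, norm_smul, h, Real.norm_eq_abs, mul_max_of_nonneg _ _ (abs_nonneg a), norm_smul,
    Real.norm_eq_abs, ← mul_assoc, ← abs_mul, mul_div_cancel₀ _ ha]

theorem symm_s11 (h : PerpInf x y) : PerpInf y x := fun k => by
  simpa [norm_smul, max_comm, add_comm] using h.norm_smul_add_smul k 1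

theorem neg_right (h : PerpInf x y) : PerpInf x (-y) := fun k => by
  simpa only [smul_neg, ← neg_smul] using h (-k)

theorem apply_nonpos_of_apply_eq_norm (h : PerpInf x y) (hx : x ≠ 0) {f : X →L[ℝ] ℝ}
    (hf : ‖f‖ ≤ 1) (hfx : f x = ‖x‖) : f y ≤ 0 := by
  rcases eq_or_ne y 0 with rfl | hy
  · simp
  set k := ‖x‖ / ‖y‖
  have hk : 0 < k := div_pos (norm_pos_iff.mpr hx) (norm_pos_iff.mpr hy)
  have hky : ‖k • y‖ = ‖x‖ := by
    rw [norm_smul, Real.norm_of_nonneg hk.le, div_mul_cancel₀ _ (norm_ne_zero_iff.mpr hy)]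
  have hbound : ‖x‖ + k * f y ≤ ‖x‖ :=
    calc ‖x‖ + k * f y = f (x + k • y) := by simp [hfx]
      _ ≤ ‖x + k • y‖ := (le_abs_self _).trans (f.le_of_opNorm_le hf _ |>.trans_eq (one_mul _))
      _ = ‖x‖ := by rw [h, hky, max_self]
  exact nonpos_of_mul_nonpos_right (by linarith) hk

theorem apply_eq_zero_of_apply_eq_norm (h : PerpInf x y) (hx : x ≠ 0) {f : X →L[ℝ] ℝ}
    (hf : ‖f‖ ≤ 1) (hfx : f x = ‖x‖) : f y = 0 := by
  have hneg := h.neg_right.apply_nonpos_of_apply_eq_norm hx hf hfx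
  rw [map_neg, neg_nonpos] at hneg
  exact le_antisymm (h.apply_nonpos_of_apply_eq_norm hx hf hfx) hneg

theorem norm_smul_add_smul_of_apply_eq_norm (h : PerpInf x y) (hx : x ≠ 0) (hy : y ≠ 0)
    {f₁ f₂ : X →L[ℝ] ℝ} (hf₁ : ‖f₁‖ ≤ 1) (hf₂ : ‖f₂‖ ≤ 1) (hf₁x : f₁ x = ‖x‖)
    (hf₂y : f₂ y = ‖y‖) (α₁ α₂ : ℝ) :
    ‖α₁ • f₁ + α₂ • f₂‖ = |α₁| + |α₂| := by
  refine le_antisymm ?_ ?_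
  · calc ‖α₁ • f₁ + α₂ • f₂‖ ≤ |α₁| * ‖f₁‖ + |α₂| * ‖f₂‖ := by
          simpa only [norm_smul, Real.norm_eq_abs] using norm_add_le (α₁ • f₁) (α₂ • f₂)
      _ ≤ |α₁| + |α₂| := by
          gcongr <;> exact mul_le_of_le_one_right (abs_nonneg _) ‹_›
  · have hx' : 0 < ‖x‖ := norm_pos_iff.mpr hx
    have hy' : 0 < ‖y‖ := norm_pos_iff.mpr hy
    have hf₁y := h.apply_eq_zero_of_apply_eq_norm hx hf₁ hf₁x
    have hf₂x := h.symm_s11.apply_eq_zero_of_apply_eq_norm hy hf₂ hf₂y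
    have abs_sign_le_one (t : ℝ) : |(SignType.sign t : ℝ)| ≤ 1 := by
      cases SignType.sign t <;> simp
    set w := (SignType.sign α₁ / ‖x‖ : ℝ) • x + (SignType.sign α₂ / ‖y‖ : ℝ) • y
    have hw : ‖w‖ ≤ 1 := by
      rw [h.norm_smul_add_smul, abs_div, abs_div, abs_of_pos hx', abs_of_pos hy',
        div_mul_cancel₀ _ hx'.ne', div_mul_cancel₀ _ hy'.ne']
      exact max_le (abs_sign_le_one α₁) (abs_sign_le_one α₂)
    have hval : (α₁ • f₁ + α₂ • f₂) w = |α₁| + |α₂| := by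
      simp [w, hf₁x, hf₂y, hf₁y, hf₂x, hx'.ne', hy'.ne']
    calc |α₁| + |α₂| ≤ ‖(α₁ • f₁ + α₂ • f₂) w‖ := hval ▸ le_abs_self _
      _ ≤ ‖α₁ • f₁ + α₂ • f₂‖ * 1 := (α₁ • f₁ + α₂ • f₂).le_opNorm_of_le hw
      _ = ‖α₁ • f₁ + α₂ • f₂‖ := mul_one _

end PerpInf

theorem stmt11_general {V : Type*} [NormedAddCommGroup V] [NormedSpace ℝ V]
    (u₁ u₂ : V) (hn₁ : u₁ ≠ 0) (hn₂ : u₂ ≠ 0)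
    (hperp : PerpInf u₁ u₂)
    (f₁ f₂ : V →L[ℝ] ℝ)
    (hf₁ : ‖f₁‖ = 1) (hf₂ : ‖f₂‖ = 1)
    (hs₁ : f₁ u₁ = ‖u₁‖) (hs₂ : f₂ u₂ = ‖u₂‖)
    -- `W` is the span of `u₁, u₂` and `gᵢ = fᵢ|_W`:
    (W : Submodule ℝ V) (hW : W = Submodule.span ℝ {u₁, u₂})
    (g₁ g₂ : W →L[ℝ] ℝ) (hg₁ : g₁ = f₁.comp W.subtypeL) (hg₂ : g₂ = f₂.comp W.subtypeL) :
    f₁ u₂ = 0 ∧ f₂ u₁ = 0 ∧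
      (∀ α₁ α₂ : ℝ, ‖α₁ • g₁ + α₂ • g₂‖ = |α₁| + |α₂|) ∧ PerpOne g₁ g₂ := by
  have hu₁W : u₁ ∈ W := hW ▸ Submodule.subset_span (by simp)
  have hu₂W : u₂ ∈ W := hW ▸ Submodule.subset_span (by simp)
  have hrestrict (f : V →L[ℝ] ℝ) (hf : ‖f‖ = 1) : ‖f.comp W.subtypeL‖ ≤ 1 :=
    (f.opNorm_comp_le _).trans (by simpa [hf] using W.norm_subtypeL_le)
  have hnorm : ∀ α₁ α₂ : ℝ, ‖α₁ • g₁ + α₂ • g₂‖ = |α₁| + |α₂| := by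
    subst hg₁ hg₂
    exact PerpInf.norm_smul_add_smul_of_apply_eq_norm (x := ⟨u₁, hu₁W⟩) (y := ⟨u₂, hu₂W⟩)
      (fun k => hperp k) (by simpa using hn₁) (by simpa using hn₂)
      (hrestrict f₁ hf₁) (hrestrict f₂ hf₂) hs₁ hs₂
  refine ⟨hperp.apply_eq_zero_of_apply_eq_norm hn₁ hf₁.le hs₁,
    hperp.symm_s11.apply_eq_zero_of_apply_eq_norm hn₂ hf₂.le hs₂, hnorm, fun k => ?_⟩
  have hg₁_norm : ‖g₁‖ = 1 := by simpa using hnorm 1 0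
  have hg₂_norm : ‖g₂‖ = 1 := by simpa using hnorm 0 1
  simpa [norm_smul, hg₁_norm, hg₂_norm] using hnorm 1 k

theorem stmt11 {V : Type*} [NormedAddCommGroup V] [NormedSpace ℝ V] (C : Set V)
    -- `C` is a norm-closed, proper, generating cone:
    (hCadd : ∀ x ∈ C, ∀ y ∈ C, x + y ∈ C)
    (hCsmul : ∀ x ∈ C, ∀ r : ℝ, 0 ≤ r → r • x ∈ C)
    (hCproper : ∀ x, x ∈ C → -x ∈ C → x = 0)
    (hCgen : ∀ x : V, ∃ y ∈ C, ∃ z ∈ C, x = y - z)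
    (hCclosed : IsClosed C)
    -- (O.∞.1):
    (hO1 : ∀ u v w : V, v - u ∈ C → w - v ∈ C → ‖v‖ ≤ max ‖u‖ ‖w‖)
    -- (O.∞.2):
    (hO2 : ∀ v : V, ∀ ε : ℝ, 0 < ε → ∃ u₁ ∈ C, ∃ u₂ ∈ C,
      v = u₁ - u₂ ∧ max ‖u₁‖ ‖u₂‖ ≤ ‖v‖ + ε)
    (u₁ u₂ : V) (hu₁ : u₁ ∈ C) (hu₂ : u₂ ∈ C) (hn₁ : u₁ ≠ 0) (hn₂ : u₂ ≠ 0)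
    (hperp : PerpInf u₁ u₂)
    (f₁ f₂ : V →L[ℝ] ℝ)
    (hf₁pos : ∀ x ∈ C, 0 ≤ f₁ x) (hf₂pos : ∀ x ∈ C, 0 ≤ f₂ x)
    (hf₁ : ‖f₁‖ = 1) (hf₂ : ‖f₂‖ = 1)
    (hs₁ : f₁ u₁ = ‖u₁‖) (hs₂ : f₂ u₂ = ‖u₂‖)
    -- `W` is the span of `u₁, u₂` and `gᵢ = fᵢ|_W`:
    (W : Submodule ℝ V) (hW : W = Submodule.span ℝ {u₁, u₂})
    (g₁ g₂ : W →L[ℝ] ℝ) (hg₁ : g₁ = f₁.comp W.subtypeL) (hg₂ : g₂ = f₂.comp W.subtypeL) :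
    f₁ u₂ = 0 ∧ f₂ u₁ = 0 ∧
      (∀ α₁ α₂ : ℝ, ‖α₁ • g₁ + α₂ • g₂‖ = |α₁| + |α₂|) ∧ PerpOne g₁ g₂ :=
  stmt11_general u₁ u₂ hn₁ hn₂ hperp f₁ f₂ hf₁ hf₂ hs₁ hs₂ W hW g₁ g₂ hg₁ hg₂
end

section
/- Let V be an order smooth ∞-normed space and u₁, u₂ ∈ V⁺ \ {0}. Then ‖ ‖u₁‖⁻¹u₁ − ‖u₂‖⁻¹u₂ ‖ ≤ ‖ ‖u₁‖⁻¹u₁ + ‖u₂‖⁻¹u₂ ‖, and u₁ ⊥_∞ u₂ if and only if ‖ ‖u₁‖⁻¹u₁ + ‖u₂‖⁻¹u₂ ‖ = ‖ ‖u₁‖⁻¹u₁ − ‖u₂‖⁻¹u₂ ‖. -/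
open Metric Pointwise

theorem LinearMap.exists_le_sublinear_apply_eq {E : Type*} [AddCommGroup E] [Module ℝ E]
    (N : E → ℝ) (N_hom : ∀ c : ℝ, 0 < c → ∀ x, N (c • x) = c * N x)
    (N_add : ∀ x y, N (x + y) ≤ N x + N y) (v : E) :
    ∃ g : E →ₗ[ℝ] ℝ, (∀ x, g x ≤ N x) ∧ g v = N v := by
  have N_zero : N 0 = 0 := by
    have h := N_hom 2 two_pos 0
    rw [smul_zero] at h
    linarith
  have N_neg (x : E) : -N x ≤ N (-x) := by
    have h := N_add x (-x)
    rw [add_neg_cancel, N_zero] at h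
    linarith
  have hv (c : ℝ) (hc : c • v = 0) : c • N v = 0 := by
    rcases smul_eq_zero.1 hc with rfl | rfl
    · exact zero_smul ℝ _
    · rw [N_zero, smul_zero]
  have hle (c : ℝ) : c * N v ≤ N (c • v) := by
    rcases lt_trichotomy c 0 with hc | rfl | hc
    · have h := N_neg ((-c) • v)
      rw [N_hom _ (neg_pos.2 hc), neg_smul, neg_neg] at h
      linarith
    · rw [zero_mul, zero_smul, N_zero]
    · exact (N_hom c hc v).ge
  obtain ⟨g, hg, hgN⟩ := exists_extension_of_le_sublinear
    (LinearPMap.mkSpanSingleton' v (N v) hv) N N_hom N_add (by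
      rintro ⟨x, hx⟩
      obtain ⟨c, rfl⟩ := Submodule.mem_span_singleton.1 hx
      rw [LinearPMap.mkSpanSingleton'_apply, smul_eq_mul]
      exact hle c)
  exact ⟨g, hgN, (hg ⟨v, Submodule.mem_span_singleton_self v⟩).trans
    (LinearPMap.mkSpanSingleton'_apply_self v (N v) hv _)⟩

namespace PerpInf

variable {V : Type*} [NormedAddCommGroup V] [NormedSpace ℝ V] {x y : V}

theorem norm_add_eq_norm_sub (h : PerpInf x y) : ‖x + y‖ = ‖x - y‖ := by
  have h₁ := h 1
  have h₂ := h (-1)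
  rw [one_smul] at h₁
  rw [neg_one_smul, norm_neg, ← sub_eq_add_neg] at h₂
  rw [h₁, h₂]

theorem smul_left_s12 (h : PerpInf x y) (r : ℝ) : PerpInf (r • x) y := by
  intro k
  rcases eq_or_ne r 0 with rfl | hr
  · simp
  have hxy : r • x + k • y = r • (x + (r⁻¹ * k) • y) := by
    rw [smul_add, smul_smul, mul_inv_cancel_left₀ hr]
  rw [hxy, norm_smul, h, mul_max_of_nonneg _ _ (norm_nonneg r), ← norm_smul, ← norm_smul,
    smul_smul, mul_inv_cancel_left₀ hr]

theorem smul_right_s12 (h : PerpInf x y) (r : ℝ) : PerpInf x (r • y) := by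
  intro k
  rw [smul_smul]
  exact h (k * r)

theorem smul_smul_iff {a b : ℝ} (ha : a ≠ 0) (hb : b ≠ 0) :
    PerpInf (a • x) (b • y) ↔ PerpInf x y := by
  refine ⟨fun h => ?_, fun h => (h.smul_left_s12 a).smul_right_s12 b⟩
  simpa [inv_smul_smul₀ ha, inv_smul_smul₀ hb] using (h.smul_left_s12 a⁻¹).smul_right_s12 b⁻¹

end PerpInf

section OrderedNormedSpace

variable {V : Type*} [NormedAddCommGroup V] {C : Set V} {x y : V}

theorem infDist_neg_add_le_of_add_mem (hCadd : ∀ x ∈ C, ∀ y ∈ C, x + y ∈ C) (hC : C.Nonempty)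
    (v w : V) : infDist (-(v + w)) C ≤ infDist (-v) C + infDist (-w) C := by
  refine le_of_forall_pos_le_add fun ε hε => ?_
  obtain ⟨c, hc, hvc⟩ := (infDist_lt_iff hC).1
    (lt_add_of_pos_right (infDist (-v) C) (half_pos hε))
  obtain ⟨d, hd, hwd⟩ := (infDist_lt_iff hC).1
    (lt_add_of_pos_right (infDist (-w) C) (half_pos hε))
  calc infDist (-(v + w)) C ≤ dist (-v + -w) (c + d) := by
        rw [← neg_add]; exact infDist_le_dist_of_mem (hCadd c hc d hd)
    _ ≤ dist (-v) c + dist (-w) d := dist_add_add_le _ _ _ _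
    _ ≤ infDist (-v) C + infDist (-w) C + ε := by linarith

theorem norm_le_norm_add_of_mem
    (hO1 : ∀ u v w : V, v - u ∈ C → w - v ∈ C → ‖v‖ ≤ max ‖u‖ ‖w‖)
    (hx : x ∈ C) (hy : y ∈ C) : ‖x‖ ≤ ‖x + y‖ := by
  have h := hO1 0 x (x + y) (by rwa [sub_zero]) (by rwa [add_sub_cancel_left])
  rwa [norm_zero, max_eq_right (norm_nonneg _)] at h

theorem norm_sub_le_max_of_mem
    (hO1 : ∀ u v w : V, v - u ∈ C → w - v ∈ C → ‖v‖ ≤ max ‖u‖ ‖w‖)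
    (hx : x ∈ C) (hy : y ∈ C) : ‖x - y‖ ≤ max ‖x‖ ‖y‖ := by
  have h := hO1 (-y) (x - y) x (by rwa [sub_neg_eq_add, sub_add_cancel])
    (by rwa [sub_sub_cancel])
  rwa [norm_neg, max_comm] at h

theorem norm_sub_le_norm_add_of_mem
    (hO1 : ∀ u v w : V, v - u ∈ C → w - v ∈ C → ‖v‖ ≤ max ‖u‖ ‖w‖)
    (hCadd : ∀ x ∈ C, ∀ y ∈ C, x + y ∈ C) (hx : x ∈ C) (hy : y ∈ C) :
    ‖x - y‖ ≤ ‖x + y‖ := by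
  have h := hO1 (-(x + y)) (x - y) (x + y)
    (by rw [sub_neg_eq_add, sub_add_add_cancel]; exact hCadd x hx x hx)
    (by rw [add_sub_sub_cancel]; exact hCadd y hy y hy)
  rwa [norm_neg, max_self] at h

variable [NormedSpace ℝ V]

theorem infDist_neg_smul_of_smul_mem (hCsmul : ∀ x ∈ C, ∀ r : ℝ, 0 ≤ r → r • x ∈ C)
    {c : ℝ} (hc : 0 < c) (v : V) : infDist (-(c • v)) C = c * infDist (-v) C := by
  have hcC : c • C = C := by
    ext w
    rw [Set.mem_smul_set_iff_inv_smul_mem₀ hc.ne']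
    refine ⟨fun hw => ?_, fun hw => hCsmul w hw _ (inv_nonneg.2 hc.le)⟩
    simpa [smul_smul, hc.ne'] using hCsmul _ hw c hc.le
  have h := infDist_smul₀ hc.ne' C (-v)
  rwa [hcC, Real.norm_of_nonneg hc.le, smul_neg] at h

theorem exists_dual_nonneg_apply_eq_infDist (hCadd : ∀ x ∈ C, ∀ y ∈ C, x + y ∈ C)
    (hCsmul : ∀ x ∈ C, ∀ r : ℝ, 0 ≤ r → r • x ∈ C) (hC0 : (0 : V) ∈ C) (v : V) :
    ∃ f : V →L[ℝ] ℝ, ‖f‖ ≤ 1 ∧ (∀ c ∈ C, 0 ≤ f c) ∧ f v = infDist (-v) C := by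
  obtain ⟨g, hg, hgv⟩ := LinearMap.exists_le_sublinear_apply_eq (fun v => infDist (-v) C)
    (fun c hc v => infDist_neg_smul_of_smul_mem hCsmul hc v)
    (infDist_neg_add_le_of_add_mem hCadd ⟨0, hC0⟩) v
  have hg_norm (w : V) : g w ≤ ‖w‖ := by
    simpa [dist_eq_norm] using (hg w).trans (infDist_le_dist_of_mem hC0)
  have hg_abs (w : V) : ‖g w‖ ≤ 1 * ‖w‖ := by
    rw [one_mul, Real.norm_eq_abs, abs_le]
    exact ⟨by linarith [hg_norm (-w), map_neg g w, norm_neg w], hg_norm w⟩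
  refine ⟨g.mkContinuous 1 hg_abs, g.mkContinuous_norm_le zero_le_one hg_abs,
    fun c hc => ?_, hgv⟩
  have h := hg (-c)
  rw [neg_neg, infDist_zero_of_mem hc, map_neg] at h
  simpa using h

theorem one_le_infDist_sub_of_mem
    (hO1 : ∀ u v w : V, v - u ∈ C → w - v ∈ C → ‖v‖ ≤ max ‖u‖ ‖w‖)
    (hCadd : ∀ x ∈ C, ∀ y ∈ C, x + y ∈ C) (hx : x ∈ C) (hnx : ‖x‖ = 1) (hxy : ‖x + y‖ = 1) :
    1 ≤ infDist (y - x) C := by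
  refine (le_infDist ⟨x, hx⟩).2 fun c hc => ?_
  have h2x : ‖x + x‖ = 2 := by
    rw [← two_smul ℝ, norm_smul, hnx]; norm_num
  have : (2 : ℝ) ≤ 1 + dist (y - x) c :=
    calc (2 : ℝ) = ‖x + x‖ := h2x.symm
      _ ≤ ‖x + x + c‖ := norm_le_norm_add_of_mem hO1 (hCadd x hx x hx) hc
      _ = ‖(x + y) - (y - x - c)‖ := by congr 1; abel
      _ ≤ ‖x + y‖ + ‖y - x - c‖ := norm_sub_le _ _
      _ = 1 + dist (y - x) c := by rw [hxy, dist_eq_norm]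
  linarith

theorem exists_dual_apply_eq_one_apply_eq_zero_of_mem
    (hO1 : ∀ u v w : V, v - u ∈ C → w - v ∈ C → ‖v‖ ≤ max ‖u‖ ‖w‖)
    (hCadd : ∀ x ∈ C, ∀ y ∈ C, x + y ∈ C) (hCsmul : ∀ x ∈ C, ∀ r : ℝ, 0 ≤ r → r • x ∈ C)
    (hx : x ∈ C) (hy : y ∈ C) (hnx : ‖x‖ = 1) (hxy : ‖x + y‖ = 1) :
    ∃ f : V →L[ℝ] ℝ, ‖f‖ ≤ 1 ∧ f x = 1 ∧ f y = 0 := by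
  obtain ⟨f, hf, hf_nonneg, hf_eq⟩ :=
    exists_dual_nonneg_apply_eq_infDist hCadd hCsmul (by simpa using hCsmul x hx 0 le_rfl) (x - y)
  have hfx : f x ≤ 1 := by
    simpa [hnx] using (le_abs_self _).trans (f.le_of_opNorm_le hf x)
  have hfxy : 1 ≤ f x - f y := by
    rw [← map_sub, hf_eq, neg_sub]
    exact one_le_infDist_sub_of_mem hO1 hCadd hx hnx hxy
  exact ⟨f, hf, by linarith [hf_nonneg y hy], by linarith [hf_nonneg y hy]⟩

theorem norm_smul_add_smul_le_of_mem
    (hO1 : ∀ u v w : V, v - u ∈ C → w - v ∈ C → ‖v‖ ≤ max ‖u‖ ‖w‖)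
    (hCadd : ∀ x ∈ C, ∀ y ∈ C, x + y ∈ C) (hCsmul : ∀ x ∈ C, ∀ r : ℝ, 0 ≤ r → r • x ∈ C)
    (hx : x ∈ C) (hy : y ∈ C) (a c : ℝ) :
    ‖a • x + c • y‖ ≤ max |a| |c| * ‖x + y‖ := by
  set M := max |a| |c|
  have hM : 0 ≤ M := (abs_nonneg a).trans (le_max_left _ _)
  have h := hO1 (-(M • (x + y))) (a • x + c • y) (M • (x + y))
    (by
      rw [show a • x + c • y - -(M • (x + y)) = (M + a) • x + (M + c) • y by module]
      refine hCadd _ (hCsmul x hx _ ?_) _ (hCsmul y hy _ ?_)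
      · linarith [neg_abs_le a, le_max_left |a| |c|]
      · linarith [neg_abs_le c, le_max_right |a| |c|])
    (by
      rw [show M • (x + y) - (a • x + c • y) = (M - a) • x + (M - c) • y by module]
      refine hCadd _ (hCsmul x hx _ ?_) _ (hCsmul y hy _ ?_)
      · linarith [le_abs_self a, le_max_left |a| |c|]
      · linarith [le_abs_self c, le_max_right |a| |c|])
  rwa [norm_neg, max_self, norm_smul, Real.norm_of_nonneg hM] at h

theorem perpInf_of_norm_add_eq_one
    (hO1 : ∀ u v w : V, v - u ∈ C → w - v ∈ C → ‖v‖ ≤ max ‖u‖ ‖w‖)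
    (hCadd : ∀ x ∈ C, ∀ y ∈ C, x + y ∈ C) (hCsmul : ∀ x ∈ C, ∀ r : ℝ, 0 ≤ r → r • x ∈ C)
    (hx : x ∈ C) (hy : y ∈ C) (hnx : ‖x‖ = 1) (hny : ‖y‖ = 1) (hxy : ‖x + y‖ = 1) :
    PerpInf x y := by
  obtain ⟨f, hf, hfx, hfy⟩ :=
    exists_dual_apply_eq_one_apply_eq_zero_of_mem hO1 hCadd hCsmul hx hy hnx hxy
  obtain ⟨g, hg, hgy, hgx⟩ :=
    exists_dual_apply_eq_one_apply_eq_zero_of_mem hO1 hCadd hCsmul hy hx hny (by rwa [add_comm])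
  intro k
  have hf_le := f.le_of_opNorm_le hf (x + k • y)
  have hg_le := g.le_of_opNorm_le hg (x + k • y)
  simp only [map_add, map_smul, hfx, hfy, hgx, hgy, smul_eq_mul, mul_zero, mul_one, add_zero,
    zero_add, one_mul, Real.norm_eq_abs, abs_one] at hf_le hg_le
  rw [hnx, norm_smul, hny, mul_one, Real.norm_eq_abs]
  refine le_antisymm ?_ (max_le hf_le hg_le)
  simpa [hxy] using norm_smul_add_smul_le_of_mem hO1 hCadd hCsmul hx hy 1 k

theorem perpInf_iff_norm_add_eq_norm_sub_of_mem
    (hO1 : ∀ u v w : V, v - u ∈ C → w - v ∈ C → ‖v‖ ≤ max ‖u‖ ‖w‖)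
    (hCadd : ∀ x ∈ C, ∀ y ∈ C, x + y ∈ C) (hCsmul : ∀ x ∈ C, ∀ r : ℝ, 0 ≤ r → r • x ∈ C)
    (hx : x ∈ C) (hy : y ∈ C) (hnx : ‖x‖ = 1) (hny : ‖y‖ = 1) :
    PerpInf x y ↔ ‖x + y‖ = ‖x - y‖ := by
  refine ⟨PerpInf.norm_add_eq_norm_sub, fun h => ?_⟩
  have hxy : ‖x + y‖ = 1 := by
    refine le_antisymm ?_ (hnx ▸ norm_le_norm_add_of_mem hO1 hx hy)
    simpa [h, hnx, hny] using norm_sub_le_max_of_mem hO1 hx hy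
  exact perpInf_of_norm_add_eq_one hO1 hCadd hCsmul hx hy hnx hny hxy

end OrderedNormedSpace

theorem stmt12_general {V : Type*} [NormedAddCommGroup V] [NormedSpace ℝ V] (C : Set V)
    -- `C` is a norm-closed, proper, generating cone:
    (hCadd : ∀ x ∈ C, ∀ y ∈ C, x + y ∈ C)
    (hCsmul : ∀ x ∈ C, ∀ r : ℝ, 0 ≤ r → r • x ∈ C)
    -- (O.∞.1):
    (hO1 : ∀ u v w : V, v - u ∈ C → w - v ∈ C → ‖v‖ ≤ max ‖u‖ ‖w‖)
    (u₁ u₂ : V) (hu₁ : u₁ ∈ C) (hu₂ : u₂ ∈ C) (hn₁ : u₁ ≠ 0) (hn₂ : u₂ ≠ 0) :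
    ‖‖u₁‖⁻¹ • u₁ - ‖u₂‖⁻¹ • u₂‖ ≤ ‖‖u₁‖⁻¹ • u₁ + ‖u₂‖⁻¹ • u₂‖ ∧
      (PerpInf u₁ u₂ ↔
        ‖‖u₁‖⁻¹ • u₁ + ‖u₂‖⁻¹ • u₂‖ = ‖‖u₁‖⁻¹ • u₁ - ‖u₂‖⁻¹ • u₂‖) := by
  have hx := hCsmul u₁ hu₁ _ (inv_nonneg.2 (norm_nonneg u₁))
  have hy := hCsmul u₂ hu₂ _ (inv_nonneg.2 (norm_nonneg u₂))
  refine ⟨norm_sub_le_norm_add_of_mem hO1 hCadd hx hy, ?_⟩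
  rw [← PerpInf.smul_smul_iff (inv_ne_zero (norm_ne_zero_iff.2 hn₁))
    (inv_ne_zero (norm_ne_zero_iff.2 hn₂))]
  exact perpInf_iff_norm_add_eq_norm_sub_of_mem hO1 hCadd hCsmul hx hy
    (norm_smul_inv_norm hn₁) (norm_smul_inv_norm hn₂)

theorem stmt12 {V : Type*} [NormedAddCommGroup V] [NormedSpace ℝ V] (C : Set V)
    -- `C` is a norm-closed, proper, generating cone:
    (hCadd : ∀ x ∈ C, ∀ y ∈ C, x + y ∈ C)
    (hCsmul : ∀ x ∈ C, ∀ r : ℝ, 0 ≤ r → r • x ∈ C)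
    (hCproper : ∀ x, x ∈ C → -x ∈ C → x = 0)
    (hCgen : ∀ x : V, ∃ y ∈ C, ∃ z ∈ C, x = y - z)
    (hCclosed : IsClosed C)
    -- (O.∞.1):
    (hO1 : ∀ u v w : V, v - u ∈ C → w - v ∈ C → ‖v‖ ≤ max ‖u‖ ‖w‖)
    -- (O.∞.2):
    (hO2 : ∀ v : V, ∀ ε : ℝ, 0 < ε → ∃ u₁ ∈ C, ∃ u₂ ∈ C,
      v = u₁ - u₂ ∧ max ‖u₁‖ ‖u₂‖ ≤ ‖v‖ + ε)
    (u₁ u₂ : V) (hu₁ : u₁ ∈ C) (hu₂ : u₂ ∈ C) (hn₁ : u₁ ≠ 0) (hn₂ : u₂ ≠ 0) :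
    ‖‖u₁‖⁻¹ • u₁ - ‖u₂‖⁻¹ • u₂‖ ≤ ‖‖u₁‖⁻¹ • u₁ + ‖u₂‖⁻¹ • u₂‖ ∧
      (PerpInf u₁ u₂ ↔
        ‖‖u₁‖⁻¹ • u₁ + ‖u₂‖⁻¹ • u₂‖ = ‖‖u₁‖⁻¹ • u₁ - ‖u₂‖⁻¹ • u₂‖) :=
  stmt12_general C hCadd hCsmul hO1 u₁ u₂ hu₁ hu₂ hn₁ hn₂
end

section
/- Let V be an order smooth ∞-normed space and u₁, u₂ ∈ V⁺ with u₁ ⊥_∞ u₂. If u₁ − u₂ ∈ V⁺, then u₂ = 0. -/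
theorem norm_le_norm_of_mem_of_sub_mem {V : Type*} [SeminormedAddCommGroup V] {C : Set V}
    (hO1 : ∀ u v w : V, v - u ∈ C → w - v ∈ C → ‖v‖ ≤ max ‖u‖ ‖w‖)
    {v w : V} (hv : v ∈ C) (hwv : w - v ∈ C) : ‖v‖ ≤ ‖w‖ := by
  simpa using hO1 0 v w (by simpa using hv) hwv

theorem PerpInf.norm_add_smul_div_norm {X : Type*} [NormedAddCommGroup X] [NormedSpace ℝ X]
    {x y : X} (hxy : PerpInf x y) (hy : y ≠ 0) : ‖x + (‖x‖ / ‖y‖) • y‖ = ‖x‖ := by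
  rw [hxy, norm_smul, Real.norm_of_nonneg (by positivity),
    div_mul_cancel₀ _ (norm_ne_zero_iff.mpr hy), max_self]

theorem stmt13_general {V : Type*} [NormedAddCommGroup V] [NormedSpace ℝ V] (C : Set V)
    (hCsmul : ∀ x ∈ C, ∀ r : ℝ, 0 ≤ r → r • x ∈ C)
    -- (O.∞.1):
    (hO1 : ∀ u v w : V, v - u ∈ C → w - v ∈ C → ‖v‖ ≤ max ‖u‖ ‖w‖)
    (u₁ u₂ : V) (hu₂ : u₂ ∈ C)
    (hperp : PerpInf u₁ u₂) (hdiff : u₁ - u₂ ∈ C) :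
    u₂ = 0 := by
  by_contra hne
  set k : ℝ := ‖u₁‖ / ‖u₂‖
  have hk : 0 ≤ k := by positivity
  have hnorm_u₁ : ‖u₁‖ = k * ‖u₂‖ := (div_mul_cancel₀ _ (norm_ne_zero_iff.mpr hne)).symm
  have hsub : (u₁ + k • u₂) - (1 + k) • u₂ = u₁ - u₂ := by
    rw [add_smul, one_smul]; abel
  have hmono : ‖(1 + k) • u₂‖ ≤ ‖u₁ + k • u₂‖ :=
    norm_le_norm_of_mem_of_sub_mem hO1 (hCsmul u₂ hu₂ _ (by positivity)) (hsub ▸ hdiff)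
  rw [hperp.norm_add_smul_div_norm hne, norm_smul, Real.norm_of_nonneg (by positivity),
    hnorm_u₁] at hmono
  have hpos : 0 < ‖u₂‖ := norm_pos_iff.mpr hne
  nlinarith

theorem stmt13 {V : Type*} [NormedAddCommGroup V] [NormedSpace ℝ V] (C : Set V)
    -- `C` is a norm-closed, proper, generating cone:
    (hCadd : ∀ x ∈ C, ∀ y ∈ C, x + y ∈ C)
    (hCsmul : ∀ x ∈ C, ∀ r : ℝ, 0 ≤ r → r • x ∈ C)
    (hCproper : ∀ x, x ∈ C → -x ∈ C → x = 0)
    (hCgen : ∀ x : V, ∃ y ∈ C, ∃ z ∈ C, x = y - z)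
    (hCclosed : IsClosed C)
    -- (O.∞.1):
    (hO1 : ∀ u v w : V, v - u ∈ C → w - v ∈ C → ‖v‖ ≤ max ‖u‖ ‖w‖)
    -- (O.∞.2):
    (hO2 : ∀ v : V, ∀ ε : ℝ, 0 < ε → ∃ u₁ ∈ C, ∃ u₂ ∈ C,
      v = u₁ - u₂ ∧ max ‖u₁‖ ‖u₂‖ ≤ ‖v‖ + ε)
    (u₁ u₂ : V) (hu₁ : u₁ ∈ C) (hu₂ : u₂ ∈ C)
    (hperp : PerpInf u₁ u₂) (hdiff : u₁ - u₂ ∈ C) :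
    u₂ = 0 :=
  stmt13_general C hCsmul hO1 u₁ u₂ hu₂ hperp hdiff
end

section
/- Let (V, e) be an order unit space and u₁, u₂ ∈ V⁺ \ {0}. Then u₁ ⊥_∞ u₂ if and only if ‖u₁‖⁻¹u₁ + ‖u₂‖⁻¹u₂ ≤ e. -/
/-- The order is given by its positive cone `C`: `x ≤ y` means `y - x ∈ C`. -/
structure IsOrderUnitNorm {V : Type*} [NormedAddCommGroup V] [NormedSpace ℝ V] (C : Set V)
    (e : V) : Prop where
  add_mem : ∀ x ∈ C, ∀ y ∈ C, x + y ∈ C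
  smul_mem : ∀ x ∈ C, ∀ r : ℝ, 0 ≤ r → r • x ∈ C
  unit_mem : e ∈ C
  exists_bound : ∀ v : V, ∃ k : ℝ, 0 < k ∧ k • e - v ∈ C ∧ k • e + v ∈ C
  archimedean : ∀ v : V, (∀ k : ℝ, 0 < k → k • e + v ∈ C) → v ∈ C
  norm_eq : ∀ v : V, ‖v‖ = sInf {k : ℝ | 0 < k ∧ k • e - v ∈ C ∧ k • e + v ∈ C}

namespace IsOrderUnitNorm

variable {V : Type*} [NormedAddCommGroup V] [NormedSpace ℝ V] {C : Set V} {e : V}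

theorem smul_unit_add_mem (h : IsOrderUnitNorm C e) {x : V} (hx : x ∈ C) {t : ℝ} (ht : 0 ≤ t) :
    t • e + x ∈ C :=
  h.add_mem _ (h.smul_mem e h.unit_mem t ht) x hx

theorem norm_le_of_mem (h : IsOrderUnitNorm C e) {v : V} {t : ℝ} (ht : 0 ≤ t)
    (h₁ : t • e - v ∈ C) (h₂ : t • e + v ∈ C) : ‖v‖ ≤ t := by
  rw [h.norm_eq v]
  refine le_of_forall_pos_le_add fun ε hε =>
    csInf_le ⟨0, fun k hk => hk.1.le⟩ ⟨by linarith, ?_, ?_⟩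
  · rw [show (t + ε) • e - v = ε • e + (t • e - v) by module]
    exact h.smul_unit_add_mem h₁ hε.le
  · rw [show (t + ε) • e + v = ε • e + (t • e + v) by module]
    exact h.smul_unit_add_mem h₂ hε.le

theorem norm_smul_sub_mem (h : IsOrderUnitNorm C e) (v : V) : ‖v‖ • e - v ∈ C := by
  refine h.archimedean _ fun t ht => ?_
  have hlt : sInf {k : ℝ | 0 < k ∧ k • e - v ∈ C ∧ k • e + v ∈ C} < ‖v‖ + t := by
    rw [← h.norm_eq v]; linarith
  obtain ⟨s, hs, hst⟩ := exists_lt_of_csInf_lt (h.exists_bound v) hlt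
  rw [show t • e + (‖v‖ • e - v) = (‖v‖ + t - s) • e + (s • e - v) by module]
  exact h.smul_unit_add_mem hs.2.1 (by linarith)

theorem norm_le_of_smul_sub_mem (h : IsOrderUnitNorm C e) {u : V} (hu : u ∈ C) {t : ℝ}
    (ht : 0 ≤ t) (htu : t • e - u ∈ C) : ‖u‖ ≤ t :=
  h.norm_le_of_mem ht htu (h.smul_unit_add_mem hu ht)

section NormalizedPair

variable {p q : V}

theorem smul_sub_smul_add_smul_mem (h : IsOrderUnitNorm C e) (hp : p ∈ C) (hq : q ∈ C)
    (hpq : e - (p + q) ∈ C) {α β M : ℝ} (hM : 0 ≤ M) (hα : α ≤ M) (hβ : β ≤ M) :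
    M • e - (α • p + β • q) ∈ C := by
  rw [show M • e - (α • p + β • q) = M • (e - (p + q)) + (M - α) • p + (M - β) • q by module]
  exact h.add_mem _ (h.add_mem _ (h.smul_mem _ hpq M hM) _ (h.smul_mem p hp _ (by linarith)))
    _ (h.smul_mem q hq _ (by linarith))

theorem norm_smul_add_smul_le (h : IsOrderUnitNorm C e) (hp : p ∈ C) (hq : q ∈ C)
    (hpq : e - (p + q) ∈ C) (α β : ℝ) : ‖α • p + β • q‖ ≤ max |α| |β| := by
  have hM : 0 ≤ max |α| |β| := (abs_nonneg α).trans (le_max_left _ _)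
  refine h.norm_le_of_mem hM
    (h.smul_sub_smul_add_smul_mem hp hq hpq hM ((le_abs_self α).trans (le_max_left _ _))
      ((le_abs_self β).trans (le_max_right _ _))) ?_
  rw [← sub_neg_eq_add, neg_add, ← neg_smul, ← neg_smul]
  exact h.smul_sub_smul_add_smul_mem hp hq hpq hM ((neg_le_abs α).trans (le_max_left _ _))
    ((neg_le_abs β).trans (le_max_right _ _))

theorem le_norm_smul_add_smul (h : IsOrderUnitNorm C e) (hp : p ∈ C) (hq : q ∈ C)
    (hp₁ : ‖p‖ = 1) (hpq : e - (p + q) ∈ C) {α : ℝ} (hα : 0 ≤ α) (β : ℝ) :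
    α ≤ ‖α • p + β • q‖ := by
  set N := ‖α • p + β • q‖
  have hmem : (N + |β|) • e - (α + |β|) • p ∈ C := by
    rw [show (N + |β|) • e - (α + |β|) • p
        = (N • e - (α • p + β • q)) + |β| • (e - (p + q)) + (β + |β|) • q by module]
    exact h.add_mem _ (h.add_mem _ (h.norm_smul_sub_mem _) _ (h.smul_mem _ hpq _ (abs_nonneg β)))
      _ (h.smul_mem q hq _ (by linarith [neg_abs_le β]))
  have hαβ : 0 ≤ α + |β| := add_nonneg hα (abs_nonneg β)
  have := h.norm_le_of_smul_sub_mem (h.smul_mem p hp _ hαβ)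
    (add_nonneg (norm_nonneg _) (abs_nonneg β)) hmem
  rw [norm_smul, hp₁, mul_one, Real.norm_of_nonneg hαβ] at this
  linarith

theorem abs_le_norm_smul_add_smul (h : IsOrderUnitNorm C e) (hp : p ∈ C) (hq : q ∈ C)
    (hp₁ : ‖p‖ = 1) (hpq : e - (p + q) ∈ C) (α β : ℝ) : |α| ≤ ‖α • p + β • q‖ := by
  rcases le_or_gt 0 α with hα | hα
  · rw [abs_of_nonneg hα]
    exact h.le_norm_smul_add_smul hp hq hp₁ hpq hα β
  · rw [abs_of_neg hα, ← norm_neg, neg_add, ← neg_smul, ← neg_smul]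
    exact h.le_norm_smul_add_smul hp hq hp₁ hpq (by linarith) (-β)

theorem norm_smul_add_smul_eq_max (h : IsOrderUnitNorm C e) (hp : p ∈ C) (hq : q ∈ C)
    (hp₁ : ‖p‖ = 1) (hq₁ : ‖q‖ = 1) (hpq : e - (p + q) ∈ C) (α β : ℝ) :
    ‖α • p + β • q‖ = max |α| |β| := by
  refine le_antisymm (h.norm_smul_add_smul_le hp hq hpq α β) (max_le ?_ ?_)
  · exact h.abs_le_norm_smul_add_smul hp hq hp₁ hpq α β
  · rw [add_comm]
    exact h.abs_le_norm_smul_add_smul hq hp hq₁ (by rwa [add_comm]) β α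

end NormalizedPair

variable {u₁ u₂ : V}

theorem sub_inv_norm_smul_add_mem_of_perpInf (h : IsOrderUnitNorm C e) (hn₁ : u₁ ≠ 0)
    (hn₂ : u₂ ≠ 0) (hperp : PerpInf u₁ u₂) : e - (‖u₁‖⁻¹ • u₁ + ‖u₂‖⁻¹ • u₂) ∈ C := by
  have hpos₁ : 0 < ‖u₁‖ := norm_pos_iff.mpr hn₁
  have hpos₂ : 0 < ‖u₂‖ := norm_pos_iff.mpr hn₂
  have hnorm : ‖u₁ + (‖u₁‖ / ‖u₂‖) • u₂‖ = ‖u₁‖ := by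
    rw [hperp, norm_smul, Real.norm_of_nonneg (by positivity), div_mul_cancel₀ _ hpos₂.ne',
      max_self]
  have hmem := h.smul_mem _ (h.norm_smul_sub_mem (u₁ + (‖u₁‖ / ‖u₂‖) • u₂)) ‖u₁‖⁻¹
    (inv_nonneg.mpr hpos₁.le)
  rw [hnorm] at hmem
  convert hmem using 1
  match_scalars <;> field_simp

theorem perpInf_of_sub_inv_norm_smul_add_mem (h : IsOrderUnitNorm C e) (hu₁ : u₁ ∈ C)
    (hu₂ : u₂ ∈ C) (hn₁ : u₁ ≠ 0) (hn₂ : u₂ ≠ 0)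
    (hpq : e - (‖u₁‖⁻¹ • u₁ + ‖u₂‖⁻¹ • u₂) ∈ C) : PerpInf u₁ u₂ := by
  have norm_inv_norm_smul {u : V} (hu : u ≠ 0) : ‖‖u‖⁻¹ • u‖ = 1 := by
    rw [norm_smul, norm_inv, norm_norm, inv_mul_cancel₀ (norm_ne_zero_iff.mpr hu)]
  intro k
  have hsplit : u₁ + k • u₂ = ‖u₁‖ • (‖u₁‖⁻¹ • u₁) + (k * ‖u₂‖) • (‖u₂‖⁻¹ • u₂) := by
    match_scalars <;> field_simp [norm_ne_zero_iff.mpr hn₁, norm_ne_zero_iff.mpr hn₂]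
  rw [hsplit, h.norm_smul_add_smul_eq_max (h.smul_mem u₁ hu₁ _ (by positivity))
    (h.smul_mem u₂ hu₂ _ (by positivity)) (norm_inv_norm_smul hn₁) (norm_inv_norm_smul hn₂) hpq,
    abs_norm, norm_smul, Real.norm_eq_abs, abs_mul, abs_norm]

end IsOrderUnitNorm

theorem stmt14_general {V : Type*} [NormedAddCommGroup V] [NormedSpace ℝ V] (C : Set V) (e : V)
    -- `C` is a norm-closed, proper, generating cone:
    (hCadd : ∀ x ∈ C, ∀ y ∈ C, x + y ∈ C)
    (hCsmul : ∀ x ∈ C, ∀ r : ℝ, 0 ≤ r → r • x ∈ C)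
    -- `e` is an Archimedean order unit:
    (he : e ∈ C)
    (hunit : ∀ v : V, ∃ k : ℝ, 0 < k ∧ k • e - v ∈ C ∧ k • e + v ∈ C)
    (harch : ∀ v : V, (∀ k : ℝ, 0 < k → k • e + v ∈ C) → v ∈ C)
    -- the norm is the order unit norm determined by `e`:
    (hnorm : ∀ v : V, ‖v‖ = sInf {k : ℝ | 0 < k ∧ k • e - v ∈ C ∧ k • e + v ∈ C})
    (u₁ u₂ : V) (hu₁ : u₁ ∈ C) (hu₂ : u₂ ∈ C) (hn₁ : u₁ ≠ 0) (hn₂ : u₂ ≠ 0) :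
    PerpInf u₁ u₂ ↔ e - (‖u₁‖⁻¹ • u₁ + ‖u₂‖⁻¹ • u₂) ∈ C := by
  have h : IsOrderUnitNorm C e := ⟨hCadd, hCsmul, he, hunit, harch, hnorm⟩
  exact ⟨h.sub_inv_norm_smul_add_mem_of_perpInf hn₁ hn₂,
    h.perpInf_of_sub_inv_norm_smul_add_mem hu₁ hu₂ hn₁ hn₂⟩

theorem stmt14 {V : Type*} [NormedAddCommGroup V] [NormedSpace ℝ V] (C : Set V) (e : V)
    -- `C` is a norm-closed, proper, generating cone:
    (hCadd : ∀ x ∈ C, ∀ y ∈ C, x + y ∈ C)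
    (hCsmul : ∀ x ∈ C, ∀ r : ℝ, 0 ≤ r → r • x ∈ C)
    (hCproper : ∀ x, x ∈ C → -x ∈ C → x = 0)
    (hCgen : ∀ x : V, ∃ y ∈ C, ∃ z ∈ C, x = y - z)
    (hCclosed : IsClosed C)
    -- `e` is an Archimedean order unit:
    (he : e ∈ C)
    (hunit : ∀ v : V, ∃ k : ℝ, 0 < k ∧ k • e - v ∈ C ∧ k • e + v ∈ C)
    (harch : ∀ v : V, (∀ k : ℝ, 0 < k → k • e + v ∈ C) → v ∈ C)
    -- the norm is the order unit norm determined by `e`: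
    (hnorm : ∀ v : V, ‖v‖ = sInf {k : ℝ | 0 < k ∧ k • e - v ∈ C ∧ k • e + v ∈ C})
    (u₁ u₂ : V) (hu₁ : u₁ ∈ C) (hu₂ : u₂ ∈ C) (hn₁ : u₁ ≠ 0) (hn₂ : u₂ ≠ 0) :
    PerpInf u₁ u₂ ↔ e - (‖u₁‖⁻¹ • u₁ + ‖u₂‖⁻¹ • u₂) ∈ C :=
  stmt14_general C e hCadd hCsmul he hunit harch hnorm u₁ u₂ hu₁ hu₂ hn₁ hn₂
end

section
/- Let (V, e) be an order unit space and u ∈ V⁺ \ {0}. Then there exists a nonzero v ∈ V⁺ with u ⊥_∞ v if and only if there exists a positive functional f ∈ V'⁺ with ‖f‖ = 1 and f(u) = 0. -/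
/-!
The interior of the cone `C` consists of the `x` with `x - ε • e ∈ C` for some `ε > 0`.
If `u ⊥_∞ v` with `0 ≠ v ∈ C`, then for `k = ‖u‖ / ‖v‖` we get `k • v ≤ ‖u‖ • e - u`, which is
incompatible with `u ≥ ε • e`; so `u` is a boundary point of `C`, and a supporting hyperplane at `u`
(Hahn–Banach) is, after normalisation, a state vanishing at `u`.

Conversely, given such a state `f`, put `v = ‖u‖ • e - u`. Since `u + v = ‖u‖ • e` with `u, v ≥ 0`,
`‖α • u + β • v‖ ≤ max |α| |β| * ‖u‖`; the matching lower bounds for `‖u + k • v‖` come from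
`f (u + k • v) = k * ‖u‖` and from the order bound `(1 - k) • u ≤ ‖u + k • v‖ • e - k * ‖u‖ • e`.
Throughout, a positive functional has norm `f e`, so the states are exactly the positive
functionals of norm one.
-/

theorem nonpos_and_nonneg_of_forall_pos_mul_lt {a b : ℝ} (h : ∀ t > 0, t * a < b) :
    a ≤ 0 ∧ 0 ≤ b := by
  have ha : a ≤ 0 := by
    by_contra! ha
    have := h ((|b| + 1) / a) (by positivity)
    rw [div_mul_cancel₀ _ ha.ne'] at this
    linarith [le_abs_self b]
  refine ⟨ha, ?_⟩
  by_contra! hb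
  rcases ha.eq_or_lt with rfl | ha
  · linarith [h 1 one_pos]
  · have := h (b / a) (div_pos_of_neg_of_neg hb ha)
    rw [div_mul_cancel₀ _ ha.ne] at this
    exact lt_irrefl b this

/-- `(V, C, e)` is an order unit space and `‖·‖` is its order unit norm. -/
structure IsOrderUnitNorm_s15 {V : Type*} [NormedAddCommGroup V] [NormedSpace ℝ V]
    (C : Set V) (e : V) : Prop where
  add_mem : ∀ x ∈ C, ∀ y ∈ C, x + y ∈ C
  smul_mem : ∀ x ∈ C, ∀ r : ℝ, 0 ≤ r → r • x ∈ C
  eq_zero_of_mem_of_neg_mem : ∀ x, x ∈ C → -x ∈ C → x = 0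
  unit_mem : e ∈ C
  exists_smul_unit_sub_mem_and_add_mem :
    ∀ v : V, ∃ k : ℝ, 0 < k ∧ k • e - v ∈ C ∧ k • e + v ∈ C
  mem_of_forall_smul_unit_add_mem : ∀ v : V, (∀ k : ℝ, 0 < k → k • e + v ∈ C) → v ∈ C
  norm_eq_sInf : ∀ v : V, ‖v‖ = sInf {k : ℝ | 0 < k ∧ k • e - v ∈ C ∧ k • e + v ∈ C}

namespace IsOrderUnitNorm_s15

variable {V : Type*} [NormedAddCommGroup V] [NormedSpace ℝ V] {C : Set V} {e : V}

theorem zero_mem (h : IsOrderUnitNorm_s15 C e) : (0 : V) ∈ C := by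
  simpa using h.smul_mem e h.unit_mem 0 le_rfl

theorem convex (h : IsOrderUnitNorm_s15 C e) : Convex ℝ C :=
  fun x hx y hy a b ha hb _ => h.add_mem _ (h.smul_mem x hx a ha) _ (h.smul_mem y hy b hb)

theorem norm_le_iff (h : IsOrderUnitNorm_s15 C e) {v : V} {a : ℝ} (ha : 0 ≤ a) :
    ‖v‖ ≤ a ↔ a • e - v ∈ C ∧ a • e + v ∈ C := by
  constructor
  · intro hva
    have bound_of_lt : ∀ k, ‖v‖ < k → k • e - v ∈ C ∧ k • e + v ∈ C := by
      intro k hk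
      rw [h.norm_eq_sInf] at hk
      obtain ⟨s, ⟨-, hs₁, hs₂⟩, hsk⟩ := exists_lt_of_csInf_lt
        (let ⟨k, hk⟩ := h.exists_smul_unit_sub_mem_and_add_mem v; ⟨k, hk⟩) hk
      have hse : (k - s) • e ∈ C := h.smul_mem e h.unit_mem _ (sub_nonneg.2 hsk.le)
      constructor
      · convert h.add_mem _ hse _ hs₁ using 1; module
      · convert h.add_mem _ hse _ hs₂ using 1; module
    constructor
    · refine h.mem_of_forall_smul_unit_add_mem _ fun k hk => ?_
      convert (bound_of_lt (k + a) (by linarith)).1 using 1; module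
    · refine h.mem_of_forall_smul_unit_add_mem _ fun k hk => ?_
      convert (bound_of_lt (k + a) (by linarith)).2 using 1; module
  · rintro ⟨h₁, h₂⟩
    rcases ha.eq_or_lt with rfl | ha
    · rw [h.eq_zero_of_mem_of_neg_mem v (by simpa using h₂) (by simpa using h₁), norm_zero]
    · rw [h.norm_eq_sInf]
      exact csInf_le ⟨0, fun k hk => hk.1.le⟩ ⟨ha, h₁, h₂⟩

theorem norm_smul_unit_sub_mem (h : IsOrderUnitNorm_s15 C e) (v : V) : ‖v‖ • e - v ∈ C :=
  ((h.norm_le_iff (norm_nonneg v)).1 le_rfl).1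

theorem norm_le_of_mem_of_smul_unit_sub_mem (h : IsOrderUnitNorm_s15 C e) {x : V} {a : ℝ}
    (hx : x ∈ C) (hax : a • e - x ∈ C) (ha : 0 ≤ a) : ‖x‖ ≤ a :=
  (h.norm_le_iff ha).2 ⟨hax, h.add_mem _ (h.smul_mem e h.unit_mem a ha) _ hx⟩

theorem norm_unit_le (h : IsOrderUnitNorm_s15 C e) : ‖e‖ ≤ 1 :=
  h.norm_le_of_mem_of_smul_unit_sub_mem h.unit_mem (by simpa using h.zero_mem) zero_le_one

theorem unit_ne_zero [Nontrivial V] (h : IsOrderUnitNorm_s15 C e) : e ≠ 0 := by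
  rintro rfl
  obtain ⟨v, hv⟩ := exists_ne (0 : V)
  obtain ⟨k, -, h₁, h₂⟩ := h.exists_smul_unit_sub_mem_and_add_mem v
  rw [smul_zero, zero_sub] at h₁
  rw [smul_zero, zero_add] at h₂
  exact hv (h.eq_zero_of_mem_of_neg_mem v h₂ h₁)

theorem nonneg_of_smul_unit_mem [Nontrivial V] (h : IsOrderUnitNorm_s15 C e) {a : ℝ}
    (ha : a • e ∈ C) : 0 ≤ a := by
  by_contra! ha'
  have hneg : -(a • e) ∈ C := by
    simpa [neg_smul] using h.smul_mem e h.unit_mem (-a) (by linarith)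
  rcases smul_eq_zero.1 (h.eq_zero_of_mem_of_neg_mem _ ha hneg) with h0 | h0
  · exact ha'.ne h0
  · exact h.unit_ne_zero h0

theorem mem_interior_iff (h : IsOrderUnitNorm_s15 C e) {x : V} :
    x ∈ interior C ↔ ∃ ε : ℝ, 0 < ε ∧ x - ε • e ∈ C := by
  constructor
  · intro hx
    obtain ⟨r, hr, hball⟩ := Metric.mem_nhds_iff.1 (mem_interior_iff_mem_nhds.1 hx)
    refine ⟨r / 2, half_pos hr, hball ?_⟩
    rw [Metric.mem_ball, dist_eq_norm, sub_sub_cancel_left, norm_neg, norm_smul,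
      Real.norm_of_nonneg (half_pos hr).le]
    nlinarith [h.norm_unit_le, norm_nonneg e]
  · rintro ⟨ε, hε, hxε⟩
    refine mem_interior_iff_mem_nhds.2 (Metric.mem_nhds_iff.2 ⟨ε, hε, fun y hy => ?_⟩)
    rw [Metric.mem_ball, dist_eq_norm, ← norm_neg, neg_sub] at hy
    convert h.add_mem _ hxε _ ((h.norm_le_iff hε.le).1 hy.le).1 using 1
    module

theorem add_smul_unit_mem_interior (h : IsOrderUnitNorm_s15 C e) {x : V} {t : ℝ} (hx : x ∈ C)
    (ht : 0 < t) : x + t • e ∈ interior C :=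
  h.mem_interior_iff.2 ⟨t, ht, by simpa using hx⟩

theorem opNorm_eq_apply_unit (h : IsOrderUnitNorm_s15 C e) {f : V →L[ℝ] ℝ}
    (hf : ∀ x ∈ C, 0 ≤ f x) : ‖f‖ = f e := by
  refine le_antisymm (f.opNorm_le_bound (hf e h.unit_mem) fun x => ?_) ?_
  · obtain ⟨h₁, h₂⟩ := (h.norm_le_iff (norm_nonneg x)).1 le_rfl
    have hf₁ := hf _ h₁
    have hf₂ := hf _ h₂
    simp only [map_sub, map_add, map_smul, smul_eq_mul] at hf₁ hf₂
    rw [Real.norm_eq_abs, abs_le]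
    constructor <;> linarith
  · calc f e ≤ ‖f e‖ := le_abs_self _
      _ ≤ ‖f‖ * ‖e‖ := f.le_opNorm e
      _ ≤ ‖f‖ := mul_le_of_le_one_right (norm_nonneg f) h.norm_unit_le

theorem notMem_interior_of_perpInf [Nontrivial V] (h : IsOrderUnitNorm_s15 C e) {u v : V}
    (hv : v ∈ C) (hv0 : v ≠ 0) (huv : PerpInf u v) : u ∉ interior C := by
  rw [h.mem_interior_iff]
  rintro ⟨ε, hε, huε⟩
  set k := ‖u‖ / ‖v‖
  have hk : 0 ≤ k := by positivity
  have hkv : ‖k • v‖ = ‖u‖ := by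
    rw [norm_smul, Real.norm_of_nonneg hk, div_mul_cancel₀ _ (norm_ne_zero_iff.2 hv0)]
  have hkvC : k • v ∈ C := h.smul_mem v hv k hk
  have h₁ : ‖u‖ • e - (u + k • v) ∈ C := by
    simpa only [huv k, hkv, max_self] using h.norm_smul_unit_sub_mem (u + k • v)
  have h₂ : (‖u‖ - ε) • e - k • v ∈ C := by
    convert h.add_mem _ h₁ _ huε using 1; module
  have hε' : 0 ≤ ‖u‖ - ε :=
    h.nonneg_of_smul_unit_mem (by convert h.add_mem _ h₂ _ hkvC using 1; module)
  linarith [h.norm_le_of_mem_of_smul_unit_sub_mem hkvC h₂ hε']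

/-- A supporting hyperplane at a boundary point of `C`. -/
theorem exists_nonneg_norm_eq_one_apply_eq_zero (h : IsOrderUnitNorm_s15 C e) {u : V}
    (hu : u ∈ C) (hint : u ∉ interior C) :
    ∃ f : V →L[ℝ] ℝ, (∀ x ∈ C, 0 ≤ f x) ∧ ‖f‖ = 1 ∧ f u = 0 := by
  obtain ⟨g, hg⟩ := geometric_hahn_banach_open_point h.convex.interior isOpen_interior hint
  have hgC : ∀ x ∈ C, g x ≤ 0 := fun x hx =>
    (nonpos_and_nonneg_of_forall_pos_mul_lt (b := g u - g e) fun t ht => by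
      have := hg _ (h.add_smul_unit_mem_interior (h.smul_mem x hx t ht.le) one_pos)
      simp only [map_add, map_smul, one_smul, smul_eq_mul] at this
      linarith).1
  have hgu : g u = 0 := le_antisymm (hgC u hu)
    (nonpos_and_nonneg_of_forall_pos_mul_lt (a := g e) fun t ht => by
      simpa using hg _ (h.add_smul_unit_mem_interior h.zero_mem ht)).2
  have hge : g e < 0 := hgu ▸ hg e (by simpa using h.add_smul_unit_mem_interior h.zero_mem one_pos)
  have hf : ∀ x ∈ C, 0 ≤ ((-g e)⁻¹ • -g) x := fun x hx => by
    simpa using mul_nonneg (inv_nonneg.2 (neg_nonneg.2 hge.le)) (neg_nonneg.2 (hgC x hx))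
  refine ⟨(-g e)⁻¹ • -g, hf, ?_, by simp [hgu]⟩
  rw [h.opNorm_eq_apply_unit hf]
  simp [hge.ne]

section State

variable {u : V} {f : V →L[ℝ] ℝ}

theorem norm_norm_smul_unit_sub (h : IsOrderUnitNorm_s15 C e) (hu : u ∈ C)
    (hf : ∀ x ∈ C, 0 ≤ f x) (hf1 : ‖f‖ = 1) (hfu : f u = 0) : ‖‖u‖ • e - u‖ = ‖u‖ := by
  have hfe : f e = 1 := (h.opNorm_eq_apply_unit hf).symm.trans hf1
  refine le_antisymm (h.norm_le_of_mem_of_smul_unit_sub_mem (h.norm_smul_unit_sub_mem u)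
    (by simpa using hu) (norm_nonneg u)) ?_
  simpa [hf1, hfe, hfu] using f.le_opNorm (‖u‖ • e - u)

theorem norm_smul_add_smul_le_s15 (h : IsOrderUnitNorm_s15 C e) {x y : V} {M : ℝ} (hx : x ∈ C)
    (hy : y ∈ C) (hxy : x + y = M • e) (hM : 0 ≤ M) (α β : ℝ) :
    ‖α • x + β • y‖ ≤ max |α| |β| * M := by
  set c := max |α| |β|
  obtain ⟨hα₁, hα₂⟩ := abs_le.1 (le_max_left |α| |β|)
  obtain ⟨hβ₁, hβ₂⟩ := abs_le.1 (le_max_right |α| |β|)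
  have hce : (c * M) • e = c • x + c • y := by rw [mul_smul, ← hxy, smul_add]
  refine (h.norm_le_iff (mul_nonneg ((abs_nonneg α).trans (le_max_left _ _)) hM)).2 ⟨?_, ?_⟩
  · convert h.add_mem _ (h.smul_mem x hx (c - α) (by linarith)) _
      (h.smul_mem y hy (c - β) (by linarith)) using 1
    rw [hce]; module
  · convert h.add_mem _ (h.smul_mem x hx (c + α) (by linarith)) _
      (h.smul_mem y hy (c + β) (by linarith)) using 1
    rw [hce]; module

theorem perpInf_norm_smul_unit_sub (h : IsOrderUnitNorm_s15 C e) (hu : u ∈ C)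
    (hf : ∀ x ∈ C, 0 ≤ f x) (hf1 : ‖f‖ = 1) (hfu : f u = 0) : PerpInf u (‖u‖ • e - u) := by
  have hfe : f e = 1 := (h.opNorm_eq_apply_unit hf).symm.trans hf1
  have hM := norm_nonneg u
  intro k
  rw [norm_smul, h.norm_norm_smul_unit_sub hu hf hf1 hfu, Real.norm_eq_abs]
  have hlower : |k| * ‖u‖ ≤ ‖u + k • (‖u‖ • e - u)‖ := by
    have := f.le_opNorm (u + k • (‖u‖ • e - u))
    simp only [hf1, one_mul, map_add, map_smul, map_sub, hfe, hfu, smul_eq_mul] at this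
    simpa [abs_mul, abs_of_nonneg hM] using this
  refine le_antisymm ?_ (max_le ?_ hlower)
  · simpa [max_mul_of_nonneg _ _ hM] using
      h.norm_smul_add_smul_le_s15 hu (h.norm_smul_unit_sub_mem u) (by simp) hM 1 k
  · rcases le_or_gt 1 |k| with hk | hk
    · nlinarith
    · have hk1 : 0 < 1 - k := by linarith [le_abs_self k]
      -- `‖u + k • v‖ • e - (u + k • v) ∈ C` says `(1 - k) • u ≤ (‖u + k • v‖ - k * ‖u‖) • e`
      have hbound := h.norm_le_of_mem_of_smul_unit_sub_mem (h.smul_mem u hu _ hk1.le)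
        (a := ‖u + k • (‖u‖ • e - u)‖ - k * ‖u‖)
        (by convert h.norm_smul_unit_sub_mem (u + k • (‖u‖ • e - u)) using 1; module)
        (by nlinarith [le_abs_self k])
      rw [norm_smul, Real.norm_of_nonneg hk1.le] at hbound
      nlinarith

end State

end IsOrderUnitNorm_s15

theorem stmt15_general {V : Type*} [NormedAddCommGroup V] [NormedSpace ℝ V] (C : Set V) (e : V)
    -- `C` is a norm-closed, proper, generating cone:
    (hCadd : ∀ x ∈ C, ∀ y ∈ C, x + y ∈ C)
    (hCsmul : ∀ x ∈ C, ∀ r : ℝ, 0 ≤ r → r • x ∈ C)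
    (hCproper : ∀ x, x ∈ C → -x ∈ C → x = 0)
    -- `e` is an Archimedean order unit:
    (he : e ∈ C)
    (hunit : ∀ v : V, ∃ k : ℝ, 0 < k ∧ k • e - v ∈ C ∧ k • e + v ∈ C)
    (harch : ∀ v : V, (∀ k : ℝ, 0 < k → k • e + v ∈ C) → v ∈ C)
    -- the norm is the order unit norm determined by `e`:
    (hnorm : ∀ v : V, ‖v‖ = sInf {k : ℝ | 0 < k ∧ k • e - v ∈ C ∧ k • e + v ∈ C})
    (u : V) (hu : u ∈ C) (hn : u ≠ 0) :
    (∃ v ∈ C, v ≠ 0 ∧ PerpInf u v) ↔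
      ∃ f : V →L[ℝ] ℝ, (∀ x ∈ C, 0 ≤ f x) ∧ ‖f‖ = 1 ∧ f u = 0 := by
  have h : IsOrderUnitNorm_s15 C e := ⟨hCadd, hCsmul, hCproper, he, hunit, harch, hnorm⟩
  have : Nontrivial V := ⟨⟨u, 0, hn⟩⟩
  constructor
  · rintro ⟨v, hv, hv0, huv⟩
    exact h.exists_nonneg_norm_eq_one_apply_eq_zero hu (h.notMem_interior_of_perpInf hv hv0 huv)
  · rintro ⟨f, hf, hf1, hfu⟩
    refine ⟨‖u‖ • e - u, h.norm_smul_unit_sub_mem u, ?_,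
      h.perpInf_norm_smul_unit_sub hu hf hf1 hfu⟩
    rw [← norm_ne_zero_iff, h.norm_norm_smul_unit_sub hu hf hf1 hfu, norm_ne_zero_iff]
    exact hn

theorem stmt15 {V : Type*} [NormedAddCommGroup V] [NormedSpace ℝ V] (C : Set V) (e : V)
    -- `C` is a norm-closed, proper, generating cone:
    (hCadd : ∀ x ∈ C, ∀ y ∈ C, x + y ∈ C)
    (hCsmul : ∀ x ∈ C, ∀ r : ℝ, 0 ≤ r → r • x ∈ C)
    (hCproper : ∀ x, x ∈ C → -x ∈ C → x = 0)
    (hCgen : ∀ x : V, ∃ y ∈ C, ∃ z ∈ C, x = y - z)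
    (hCclosed : IsClosed C)
    -- `e` is an Archimedean order unit:
    (he : e ∈ C)
    (hunit : ∀ v : V, ∃ k : ℝ, 0 < k ∧ k • e - v ∈ C ∧ k • e + v ∈ C)
    (harch : ∀ v : V, (∀ k : ℝ, 0 < k → k • e + v ∈ C) → v ∈ C)
    -- the norm is the order unit norm determined by `e`:
    (hnorm : ∀ v : V, ‖v‖ = sInf {k : ℝ | 0 < k ∧ k • e - v ∈ C ∧ k • e + v ∈ C})
    (u : V) (hu : u ∈ C) (hn : u ≠ 0) :
    (∃ v ∈ C, v ≠ 0 ∧ PerpInf u v) ↔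
      ∃ f : V →L[ℝ] ℝ, (∀ x ∈ C, 0 ≤ f x) ∧ ‖f‖ = 1 ∧ f u = 0 :=
  stmt15_general C e hCadd hCsmul hCproper he hunit harch hnorm u hu hn
end

section
/- Let (V, e) be an order unit space and u ∈ V⁺ with ‖u‖ = 1, and suppose there is a state f of V with f(u) = 0. If v ∈ V⁺ with ‖v‖ = 1 and u ⊥_∞ v, then v ≤ e − u; moreover u ⊥_∞ (e − u). Hence e − u is the greatest norm-one positive element ∞-orthogonal to u. -/
namespace IsOrderUnitNorm

variable {V : Type*} [NormedAddCommGroup V] [NormedSpace ℝ V] {C : Set V} {e u x y : V}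
  {a b r : ℝ}

theorem smul_add_mem (h : IsOrderUnitNorm C e) (hr : 0 ≤ r) (hx : x ∈ C) : r • e + x ∈ C :=
  h.add_mem _ (h.smul_mem e h.unit_mem r hr) x hx

theorem norm_le_of_smul_sub_mem_of_smul_add_mem (h : IsOrderUnitNorm C e) (hr : 0 < r)
    (hsub : r • e - x ∈ C) (hadd : r • e + x ∈ C) : ‖x‖ ≤ r := by
  rw [h.norm_eq]
  exact csInf_le ⟨0, fun m hm => hm.1.le⟩ ⟨hr, hsub, hadd⟩

theorem le_norm (h : IsOrderUnitNorm C e)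
    (hM : ∀ m : ℝ, 0 < m → m • e - x ∈ C → m • e + x ∈ C → a ≤ m) : a ≤ ‖x‖ := by
  rw [h.norm_eq]
  obtain ⟨k, hk⟩ := h.exists_bound x
  exact le_csInf ⟨k, hk⟩ fun m hm => hM m hm.1 hm.2.1 hm.2.2

theorem smul_sub_mem_of_norm_le (h : IsOrderUnitNorm C e) (hx : ‖x‖ ≤ r) : r • e - x ∈ C := by
  refine h.archimedean _ fun t ht => ?_
  have hlt : sInf {k : ℝ | 0 < k ∧ k • e - x ∈ C ∧ k • e + x ∈ C} < r + t := by
    rw [← h.norm_eq]; linarith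
  obtain ⟨m, ⟨-, hm, -⟩, hmt⟩ :=
    exists_lt_of_csInf_lt (let ⟨k, hk⟩ := h.exists_bound x; ⟨k, hk⟩) hlt
  have hsplit : t • e + (r • e - x) = (r + t - m) • e + (m • e - x) := by module
  rw [hsplit]
  exact h.smul_add_mem (by linarith) hm

theorem sub_mem_of_norm_le_one (h : IsOrderUnitNorm C e) (hx : ‖x‖ ≤ 1) : e - x ∈ C := by
  simpa using h.smul_sub_mem_of_norm_le hx

theorem norm_le_of_sub_smul_mem_of_smul_sub_mem (h : IsOrderUnitNorm C e) (hr : 0 < r)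
    (ha : -r ≤ a) (hb : b ≤ r) (hxa : x - a • e ∈ C) (hxb : b • e - x ∈ C) : ‖x‖ ≤ r := by
  refine h.norm_le_of_smul_sub_mem_of_smul_add_mem hr ?_ ?_
  · have hsplit : r • e - x = (r - b) • e + (b • e - x) := by module
    exact hsplit ▸ h.smul_add_mem (by linarith) hxb
  · have hsplit : r • e + x = (r + a) • e + (x - a • e) := by module
    exact hsplit ▸ h.smul_add_mem (by linarith) hxa

theorem norm_le_of_mem_of_smul_sub_mem (h : IsOrderUnitNorm C e) (hr : 0 < r) (hx : x ∈ C)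
    (hxr : r • e - x ∈ C) : ‖x‖ ≤ r :=
  h.norm_le_of_sub_smul_mem_of_smul_sub_mem (a := 0) hr (by linarith) le_rfl (by simpa using hx) hxr

theorem norm_le_norm_of_mem_of_sub_mem (h : IsOrderUnitNorm C e) (hx : x ∈ C)
    (hxy : y - x ∈ C) : ‖x‖ ≤ ‖y‖ :=
  h.le_norm fun m hm hsub _ => h.norm_le_of_mem_of_smul_sub_mem hm hx <| by
    simpa using h.add_mem _ hsub _ hxy

theorem abs_apply_le_norm {F : Type*} [FunLike F V ℝ] [LinearMapClass F ℝ V ℝ]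
    (h : IsOrderUnitNorm C e) {f : F} (hf : ∀ y ∈ C, 0 ≤ f y) (hfe : f e = 1) (x : V) :
    |f x| ≤ ‖x‖ :=
  h.le_norm fun m _ hsub hadd => by
    have h₁ := hf _ hsub
    have h₂ := hf _ hadd
    simp only [map_sub, map_add, map_smul, hfe, smul_eq_mul, mul_one] at h₁ h₂
    exact abs_le.2 ⟨by linarith, by linarith⟩

theorem norm_add_smul_sub_le (h : IsOrderUnitNorm C e) (hu : u ∈ C) (heu : e - u ∈ C)
    (k : ℝ) : ‖u + k • (e - u)‖ ≤ max 1 |k| := by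
  have hpos : 0 < max 1 |k| := lt_of_lt_of_le one_pos (le_max_left _ _)
  have hk : -max 1 |k| ≤ k := by linarith [neg_abs_le k, le_max_right 1 |k|]
  rcases le_total k 1 with hk1 | hk1
  · refine h.norm_le_of_sub_smul_mem_of_smul_sub_mem (a := k) (b := 1) hpos hk (le_max_left _ _)
      ?_ ?_
    · have hsplit : u + k • (e - u) - k • e = (1 - k) • u := by module
      exact hsplit ▸ h.smul_mem _ hu _ (by linarith)
    · have hsplit : (1 : ℝ) • e - (u + k • (e - u)) = (1 - k) • (e - u) := by module
      exact hsplit ▸ h.smul_mem _ heu _ (by linarith)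
  · refine h.norm_le_of_sub_smul_mem_of_smul_sub_mem (a := 1) (b := k) hpos (by linarith)
      ((le_abs_self k).trans (le_max_right _ _)) ?_ ?_
    · have hsplit : u + k • (e - u) - (1 : ℝ) • e = (k - 1) • (e - u) := by module
      exact hsplit ▸ h.smul_mem _ heu _ (by linarith)
    · have hsplit : k • e - (u + k • (e - u)) = (k - 1) • u := by module
      exact hsplit ▸ h.smul_mem _ hu _ (by linarith)

theorem one_le_norm_add_smul_sub (h : IsOrderUnitNorm C e) (hu : u ∈ C) (heu : e - u ∈ C)
    (hun : ‖u‖ = 1) (k : ℝ) : 1 ≤ ‖u + k • (e - u)‖ := by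
  rcases le_or_gt 0 k with hk | hk
  · refine hun ▸ h.norm_le_norm_of_mem_of_sub_mem hu ?_
    simpa using h.smul_mem _ heu k hk
  · refine h.le_norm fun m hm hsub _ => ?_
    have hsplit : m • e - (u + k • (e - u)) = (m - k) • e - (1 - k) • u := by module
    have hle := h.norm_le_of_mem_of_smul_sub_mem (by linarith) (h.smul_mem _ hu (1 - k)
      (by linarith)) (hsplit ▸ hsub)
    rw [norm_smul, hun, mul_one, Real.norm_of_nonneg (by linarith)] at hle
    linarith

theorem norm_sub_eq_one {F : Type*} [FunLike F V ℝ] [LinearMapClass F ℝ V ℝ]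
    (h : IsOrderUnitNorm C e) (hu : u ∈ C) (hun : ‖u‖ ≤ 1) {f : F} (hf : ∀ y ∈ C, 0 ≤ f y)
    (hfe : f e = 1) (hfu : f u = 0) : ‖e - u‖ = 1 :=
  le_antisymm
    (h.norm_le_of_mem_of_smul_sub_mem one_pos (h.sub_mem_of_norm_le_one hun) (by simpa using hu))
    (by simpa [hfe, hfu] using h.abs_apply_le_norm hf hfe (e - u))

theorem perpInf_sub {F : Type*} [FunLike F V ℝ] [LinearMapClass F ℝ V ℝ]
    (h : IsOrderUnitNorm C e) (hu : u ∈ C) (hun : ‖u‖ = 1) {f : F} (hf : ∀ y ∈ C, 0 ≤ f y)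
    (hfe : f e = 1) (hfu : f u = 0) : PerpInf u (e - u) := by
  have heu := h.sub_mem_of_norm_le_one hun.le
  intro k
  rw [hun, norm_smul, h.norm_sub_eq_one hu hun.le hf hfe hfu, mul_one, Real.norm_eq_abs]
  refine le_antisymm (h.norm_add_smul_sub_le hu heu k)
    (max_le (h.one_le_norm_add_smul_sub hu heu hun k) ?_)
  simpa [hfe, hfu] using h.abs_apply_le_norm hf hfe (u + k • (e - u))

theorem sub_sub_mem_of_perpInf (h : IsOrderUnitNorm C e) {v : V} (hu : ‖u‖ ≤ 1)
    (hv : ‖v‖ ≤ 1) (huv : PerpInf u v) : e - u - v ∈ C := by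
  have huv₁ : ‖u + v‖ ≤ 1 := by
    simpa only [one_smul] using (huv 1).trans_le (max_le hu (by rwa [one_smul]))
  simpa only [sub_sub] using h.sub_mem_of_norm_le_one huv₁

end IsOrderUnitNorm

theorem stmt16_general {V : Type*} [NormedAddCommGroup V] [NormedSpace ℝ V] (C : Set V) (e : V)
    -- `C` is a norm-closed, proper, generating cone:
    (hCadd : ∀ x ∈ C, ∀ y ∈ C, x + y ∈ C)
    (hCsmul : ∀ x ∈ C, ∀ r : ℝ, 0 ≤ r → r • x ∈ C)
    -- `e` is an Archimedean order unit:
    (he : e ∈ C)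
    (hunit : ∀ v : V, ∃ k : ℝ, 0 < k ∧ k • e - v ∈ C ∧ k • e + v ∈ C)
    (harch : ∀ v : V, (∀ k : ℝ, 0 < k → k • e + v ∈ C) → v ∈ C)
    -- the norm is the order unit norm determined by `e`:
    (hnorm : ∀ v : V, ‖v‖ = sInf {k : ℝ | 0 < k ∧ k • e - v ∈ C ∧ k • e + v ∈ C})
    (u : V) (hu : u ∈ C) (hun : ‖u‖ = 1)
    -- there is a state `f` of `V` with `f u = 0`:
    (f : V →L[ℝ] ℝ) (hfpos : ∀ x ∈ C, 0 ≤ f x) (hfe : f e = 1)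
    (hfu : f u = 0) :
    (e - u ∈ C ∧ ‖e - u‖ = 1 ∧ PerpInf u (e - u)) ∧
      ∀ v ∈ C, ‖v‖ = 1 → PerpInf u v → (e - u) - v ∈ C := by
  have h : IsOrderUnitNorm C e := ⟨hCadd, hCsmul, he, hunit, harch, hnorm⟩
  exact ⟨⟨h.sub_mem_of_norm_le_one hun.le, h.norm_sub_eq_one hu hun.le hfpos hfe hfu,
      h.perpInf_sub hu hun hfpos hfe hfu⟩,
    fun v _ hvn huv => h.sub_sub_mem_of_perpInf hun.le hvn.le huv⟩

theorem stmt16 {V : Type*} [NormedAddCommGroup V] [NormedSpace ℝ V] (C : Set V) (e : V)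
    -- `C` is a norm-closed, proper, generating cone:
    (hCadd : ∀ x ∈ C, ∀ y ∈ C, x + y ∈ C)
    (hCsmul : ∀ x ∈ C, ∀ r : ℝ, 0 ≤ r → r • x ∈ C)
    (hCproper : ∀ x, x ∈ C → -x ∈ C → x = 0)
    (hCgen : ∀ x : V, ∃ y ∈ C, ∃ z ∈ C, x = y - z)
    (hCclosed : IsClosed C)
    -- `e` is an Archimedean order unit:
    (he : e ∈ C)
    (hunit : ∀ v : V, ∃ k : ℝ, 0 < k ∧ k • e - v ∈ C ∧ k • e + v ∈ C)
    (harch : ∀ v : V, (∀ k : ℝ, 0 < k → k • e + v ∈ C) → v ∈ C)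
    -- the norm is the order unit norm determined by `e`:
    (hnorm : ∀ v : V, ‖v‖ = sInf {k : ℝ | 0 < k ∧ k • e - v ∈ C ∧ k • e + v ∈ C})
    (u : V) (hu : u ∈ C) (hun : ‖u‖ = 1)
    -- there is a state `f` of `V` with `f u = 0`:
    (f : V →L[ℝ] ℝ) (hfpos : ∀ x ∈ C, 0 ≤ f x) (hf : ‖f‖ = 1) (hfe : f e = 1)
    (hfu : f u = 0) :
    (e - u ∈ C ∧ ‖e - u‖ = 1 ∧ PerpInf u (e - u)) ∧
      ∀ v ∈ C, ‖v‖ = 1 → PerpInf u v → (e - u) - v ∈ C :=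
  stmt16_general C e hCadd hCsmul he hunit harch hnorm u hu hun f hfpos hfe hfu
end

section
/- Let V be an order smooth 1-normed space, u₁, u₂ ∈ V⁺ \ {0}, and f_i ∈ V'⁺ with ‖f_i‖ = 1, f_i(u_i) = ‖u_i‖ (i = 1,2). Let g_i be the restrictions of f_i to the span W of {u₁, u₂}. Then [u₁ ⊥_1 u₂ and g₁(u₂) = 0 = g₂(u₁)] holds if and only if g₁ ⊥_∞ g₂ in W'. -/
section

variable {E : Type*} [NormedAddCommGroup E] [NormedSpace ℝ E]

theorem PerpOne.norm_smul_add_smul {x y : E} (h : PerpOne x y) (a b : ℝ) :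
    ‖a • x + b • y‖ = |a| * ‖x‖ + |b| * ‖y‖ := by
  rcases eq_or_ne a 0 with rfl | ha
  · simp [norm_smul]
  · have hxy : a • x + b • y = a • (x + (b / a) • y) := by
      rw [smul_add, smul_smul, mul_div_cancel₀ b ha]
    rw [hxy, norm_smul, h, norm_smul, Real.norm_eq_abs, Real.norm_eq_abs, abs_div,
      mul_add, ← mul_assoc, mul_div_cancel₀ _ (abs_ne_zero.2 ha)]

theorem ContinuousLinearMap.abs_le_opNorm_of_apply_eq_mul_norm {g : E →L[ℝ] ℝ} {x : E}
    (hx : x ≠ 0) {c : ℝ} (hgx : g x = c * ‖x‖) : |c| ≤ ‖g‖ := by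
  have h := g.le_opNorm x
  rw [hgx, Real.norm_eq_abs, abs_mul, abs_norm] at h
  exact le_of_mul_le_mul_right h (norm_pos_iff.2 hx)

theorem PerpOne.norm_smul_add_smul_of_biorthogonal {x y : E} (hxy : PerpOne x y)
    (hx : x ≠ 0) (hy : y ≠ 0) (hspan : ∀ z : E, ∃ c d : ℝ, c • x + d • y = z)
    {g h : E →L[ℝ] ℝ} (hgx : g x = ‖x‖) (hgy : g y = 0) (hhx : h x = 0) (hhy : h y = ‖y‖)
    (a b : ℝ) : ‖a • g + b • h‖ = max |a| |b| := by
  apply le_antisymm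
  · refine ContinuousLinearMap.opNorm_le_bound _ (le_max_of_le_left (abs_nonneg a)) fun z => ?_
    obtain ⟨c, d, rfl⟩ := hspan z
    have hval : (a • g + b • h) (c • x + d • y) = a * c * ‖x‖ + b * d * ‖y‖ := by
      simp only [add_apply, smul_apply, map_add, map_smul, smul_eq_mul, hgx, hgy, hhx, hhy]
      ring
    rw [hval, hxy.norm_smul_add_smul, Real.norm_eq_abs]
    calc |a * c * ‖x‖ + b * d * ‖y‖| ≤ |a| * (|c| * ‖x‖) + |b| * (|d| * ‖y‖) := by
          refine (abs_add_le _ _).trans_eq ?_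
          simp only [abs_mul, abs_norm, mul_assoc]
      _ ≤ max |a| |b| * (|c| * ‖x‖) + max |a| |b| * (|d| * ‖y‖) := by
          gcongr
          exacts [le_max_left _ _, le_max_right _ _]
      _ = max |a| |b| * (|c| * ‖x‖ + |d| * ‖y‖) := by ring
  · refine max_le ((a • g + b • h).abs_le_opNorm_of_apply_eq_mul_norm hx ?_)
      ((a • g + b • h).abs_le_opNorm_of_apply_eq_mul_norm hy ?_) <;>
      simp [hgx, hgy, hhx, hhy]

theorem PerpOne.perpInf_of_biorthogonal {x y : E} (hxy : PerpOne x y)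
    (hx : x ≠ 0) (hy : y ≠ 0) (hspan : ∀ z : E, ∃ c d : ℝ, c • x + d • y = z)
    {g h : E →L[ℝ] ℝ} (hgx : g x = ‖x‖) (hgy : g y = 0) (hhx : h x = 0) (hhy : h y = ‖y‖) :
    PerpInf g h := by
  intro k
  have hnorm := hxy.norm_smul_add_smul_of_biorthogonal hx hy hspan hgx hgy hhx hhy
  have hg : ‖g‖ = 1 := by simpa using hnorm 1 0
  have hkh : ‖k • h‖ = |k| := by simpa using hnorm 0 k
  rw [hg, hkh]
  simpa using hnorm 1 k

theorem PerpInf.norm_add_smul_le_one {g h : E →L[ℝ] ℝ} (hgh : PerpInf g h) (hg : ‖g‖ ≤ 1)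
    (hh : ‖h‖ ≤ 1) {s : ℝ} (hs : |s| ≤ 1) : ‖g + s • h‖ ≤ 1 := by
  rw [hgh s, norm_smul, Real.norm_eq_abs]
  exact max_le hg (mul_le_one₀ hs (norm_nonneg h) hh)

section PerpInf

variable {g h : E →L[ℝ] ℝ} (hgh : PerpInf g h) (hg : ‖g‖ ≤ 1) (hh : ‖h‖ ≤ 1)
include hgh hg hh

theorem PerpInf.apply_le_norm_of_abs_le_one (s : ℝ) (hs : |s| ≤ 1) (z : E) :
    g z + s * h z ≤ ‖z‖ := by
  have hz := (g + s • h).le_opNorm z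
  rw [Real.norm_eq_abs] at hz
  calc g z + s * h z = (g + s • h) z := rfl
    _ ≤ ‖z‖ := (le_abs_self _).trans <|
        hz.trans (mul_le_of_le_one_left (norm_nonneg z) (hgh.norm_add_smul_le_one hg hh hs))

theorem PerpInf.perpOne_and_biorthogonal {x y : E} (hgx : g x = ‖x‖) (hhy : h y = ‖y‖) :
    PerpOne x y ∧ g y = 0 ∧ h x = 0 := by
  have hbound := hgh.apply_le_norm_of_abs_le_one hg hh
  have hhx : h x = 0 := by
    have hplus := hbound 1 (by simp) x
    have hminus := hbound (-1) (by simp) x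
    linarith
  have hgy : g y = 0 := by
    have hplus := hbound 1 (by simp) y
    have hminus := hbound (-1) (by simp) (-y)
    simp only [map_neg, norm_neg] at hminus
    linarith
  refine ⟨fun k => le_antisymm (norm_add_le _ _) ?_, hgy, hhx⟩
  have hsign : |(SignType.sign k : ℝ)| ≤ 1 := by
    rcases lt_trichotomy k 0 with hk | rfl | hk <;> simp [*]
  have hk := hbound _ hsign (x + k • y)
  simp only [map_add, map_smul, smul_eq_mul, hgx, hgy, hhx, hhy] at hk
  rw [norm_smul, Real.norm_eq_abs, ← sign_mul_self k]
  linarith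

end PerpInf

theorem ContinuousLinearMap.opNorm_comp_subtypeL_le {F : Type*} [NormedAddCommGroup F]
    [NormedSpace ℝ F] (f : E →L[ℝ] F) (W : Submodule ℝ E) : ‖f.comp W.subtypeL‖ ≤ ‖f‖ :=
  (f.opNorm_comp_le _).trans <|
    mul_le_of_le_one_right (norm_nonneg f) (Submodule.norm_subtypeL_le W)

end

theorem stmt17_general {V : Type*} [NormedAddCommGroup V] [NormedSpace ℝ V]
    (u₁ u₂ : V) (hn₁ : u₁ ≠ 0) (hn₂ : u₂ ≠ 0)
    (f₁ f₂ : V →L[ℝ] ℝ)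
    (hf₁ : ‖f₁‖ = 1) (hf₂ : ‖f₂‖ = 1)
    (hs₁ : f₁ u₁ = ‖u₁‖) (hs₂ : f₂ u₂ = ‖u₂‖)
    -- `W` is the span of `u₁, u₂` and `gᵢ = fᵢ|_W`:
    (W : Submodule ℝ V) (hW : W = Submodule.span ℝ {u₁, u₂})
    (g₁ g₂ : W →L[ℝ] ℝ) (hg₁ : g₁ = f₁.comp W.subtypeL) (hg₂ : g₂ = f₂.comp W.subtypeL) :
    (PerpOne u₁ u₂ ∧ f₁ u₂ = 0 ∧ f₂ u₁ = 0) ↔ PerpInf g₁ g₂ := by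
  subst hW hg₁ hg₂
  let w₁ : Submodule.span ℝ {u₁, u₂} := ⟨u₁, Submodule.subset_span (by simp)⟩
  let w₂ : Submodule.span ℝ {u₁, u₂} := ⟨u₂, Submodule.subset_span (by simp)⟩
  have hspan (z : Submodule.span ℝ {u₁, u₂}) : ∃ c d : ℝ, c • w₁ + d • w₂ = z := by
    obtain ⟨c, d, hz⟩ := Submodule.mem_span_pair.1 z.2
    exact ⟨c, d, Subtype.ext hz⟩
  constructor
  · rintro ⟨hperp, h₁₂, h₂₁⟩
    exact PerpOne.perpInf_of_biorthogonal (x := w₁) (y := w₂) hperp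
      (Subtype.coe_ne_coe.1 hn₁) (Subtype.coe_ne_coe.1 hn₂) hspan hs₁ h₁₂ h₂₁ hs₂
  · intro hperp
    exact hperp.perpOne_and_biorthogonal (hf₁ ▸ f₁.opNorm_comp_subtypeL_le _)
      (hf₂ ▸ f₂.opNorm_comp_subtypeL_le _) (x := w₁) (y := w₂) hs₁ hs₂

theorem stmt17 {V : Type*} [NormedAddCommGroup V] [NormedSpace ℝ V] (C : Set V)
    -- `C` is a norm-closed, proper, generating cone:
    (hCadd : ∀ x ∈ C, ∀ y ∈ C, x + y ∈ C)
    (hCsmul : ∀ x ∈ C, ∀ r : ℝ, 0 ≤ r → r • x ∈ C)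
    (hCproper : ∀ x, x ∈ C → -x ∈ C → x = 0)
    (hCgen : ∀ x : V, ∃ y ∈ C, ∃ z ∈ C, x = y - z)
    (hCclosed : IsClosed C)
    -- (O.1.1):
    (hO1 : ∀ u v w : V, v - u ∈ C → w - v ∈ C → ‖v‖ ≤ ‖u‖ + ‖w‖)
    -- (O.1.2):
    (hO2 : ∀ v : V, ∀ ε : ℝ, 0 < ε → ∃ u₁ ∈ C, ∃ u₂ ∈ C,
      v = u₁ - u₂ ∧ ‖u₁‖ + ‖u₂‖ ≤ ‖v‖ + ε)
    (u₁ u₂ : V) (hu₁ : u₁ ∈ C) (hu₂ : u₂ ∈ C) (hn₁ : u₁ ≠ 0) (hn₂ : u₂ ≠ 0)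
    (f₁ f₂ : V →L[ℝ] ℝ)
    (hf₁pos : ∀ x ∈ C, 0 ≤ f₁ x) (hf₂pos : ∀ x ∈ C, 0 ≤ f₂ x)
    (hf₁ : ‖f₁‖ = 1) (hf₂ : ‖f₂‖ = 1)
    (hs₁ : f₁ u₁ = ‖u₁‖) (hs₂ : f₂ u₂ = ‖u₂‖)
    -- `W` is the span of `u₁, u₂` and `gᵢ = fᵢ|_W`:
    (W : Submodule ℝ V) (hW : W = Submodule.span ℝ {u₁, u₂})
    (g₁ g₂ : W →L[ℝ] ℝ) (hg₁ : g₁ = f₁.comp W.subtypeL) (hg₂ : g₂ = f₂.comp W.subtypeL) :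
    (PerpOne u₁ u₂ ∧ f₁ u₂ = 0 ∧ f₂ u₁ = 0) ↔ PerpInf g₁ g₂ :=
  stmt17_general u₁ u₂ hn₁ hn₂ f₁ f₂ hf₁ hf₂ hs₁ hs₂ W hW g₁ g₂ hg₁ hg₂
end

section
/- Let (V, B) be a base normed space and u₁, u₂ ∈ V⁺ \ {0}. Suppose f_i ∈ V'⁺ with ‖f_i‖ = 1 and f_i(u_i) = ‖u_i‖ for i = 1,2, and f₁(u₂) = 0 = f₂(u₁). Then u₁ ⊥_1 u₂, i.e., ‖u₁ + k·u₂‖ = ‖u₁‖ + ‖k·u₂‖ for all k ∈ ℝ. -/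
open scoped Pointwise
/-!
The base norm is additive on the cone, which settles `k ≥ 0`. For `k < 0` the positive unit
functionals `f₁`, `f₂` give `g = f₁ - f₂` with `g ≤ 1` on `B ∪ -B`, hence `g ≤ ‖·‖`, and
`g (u₁ + k • u₂) = ‖u₁‖ + ‖k • u₂‖` forces the triangle inequality to be an equality.
-/

section Base

variable {V : Type*} [AddCommGroup V] [Module ℝ V] {C B : Set V}

theorem Convex.exists_smul_eq_smul_add_smul (hB : Convex ℝ B) {a p : ℝ} (ha : 0 ≤ a)
    (hp : 0 ≤ p) {x y : V} (hx : x ∈ B) (hy : y ∈ B) : ∃ z ∈ B, (a + p) • z = a • x + p • y := by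
  show a • x + p • y ∈ (a + p) • B
  rw [hB.add_smul ha hp]
  exact Set.add_mem_add (Set.smul_mem_smul_set hx) (Set.smul_mem_smul_set hy)

theorem Convex.mem_convexHull_union_neg (hB : Convex ℝ B) {x : V}
    (hx : x ∈ convexHull ℝ (B ∪ -B)) : ∃ c₁ ∈ B, ∃ c₂ ∈ B, ∃ t s : ℝ,
      0 ≤ t ∧ 0 ≤ s ∧ t + s = 1 ∧ x = t • c₁ - s • c₂ := by
  rcases B.eq_empty_or_nonempty with rfl | hne
  · simp at hx
  rw [hB.convexHull_union hB.neg hne hne.neg, mem_convexJoin] at hx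
  obtain ⟨c₁, hc₁, c₂, hc₂, t, s, ht, hs, hts, rfl⟩ := hx
  exact ⟨c₁, hc₁, -c₂, Set.mem_neg.mp hc₂, t, s, ht, hs, hts, by module⟩

theorem base_coeff_eq (hBC : B ⊆ C) (hCsmul : ∀ x ∈ C, ∀ r : ℝ, 0 ≤ r → r • x ∈ C)
    (hB0 : (0 : V) ∉ B)
    (hbase : ∀ u ∈ C, u ≠ 0 → ∃! kb : ℝ × V, 0 < kb.1 ∧ kb.2 ∈ B ∧ u = kb.1 • kb.2)
    {l₁ l₂ : ℝ} (hl₁ : 0 < l₁) (hl₂ : 0 < l₂) {c₁ c₂ : V} (hc₁ : c₁ ∈ B) (hc₂ : c₂ ∈ B)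
    (h : l₁ • c₁ = l₂ • c₂) : l₁ = l₂ := by
  have hne : l₁ • c₁ ≠ 0 := smul_ne_zero hl₁.ne' (ne_of_mem_of_not_mem hc₁ hB0)
  obtain ⟨kb, -, huniq⟩ := hbase _ (hCsmul c₁ (hBC hc₁) l₁ hl₁.le) hne
  exact congrArg Prod.fst ((huniq (l₁, c₁) ⟨hl₁, hc₁, rfl⟩).trans
    (huniq (l₂, c₂) ⟨hl₂, hc₂, h⟩).symm)

theorem base_coeff_add (hBC : B ⊆ C) (hCsmul : ∀ x ∈ C, ∀ r : ℝ, 0 ≤ r → r • x ∈ C)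
    (hBconv : Convex ℝ B) (hB0 : (0 : V) ∉ B)
    (hbase : ∀ u ∈ C, u ≠ 0 → ∃! kb : ℝ × V, 0 < kb.1 ∧ kb.2 ∈ B ∧ u = kb.1 • kb.2)
    {a p q : ℝ} (ha : 0 < a) (hp : 0 ≤ p) {b c d : V} (hb : b ∈ B) (hc : c ∈ B) (hd : d ∈ B)
    (h : a • b + p • c = q • d) : q = a + p := by
  obtain ⟨e, he, hbc⟩ := hBconv.exists_smul_eq_smul_add_smul ha.le hp hb hc
  -- otherwise `(a + p) • e + (-q) • d = 0` would put `0` in `B` by convexity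
  have hq : 0 < q := by
    by_contra! hq
    obtain ⟨z, hz, hzero⟩ :=
      hBconv.exists_smul_eq_smul_add_smul (by positivity : 0 ≤ a + p) (neg_nonneg.mpr hq) he hd
    rw [hbc, h, neg_smul, add_neg_cancel, smul_eq_zero] at hzero
    exact hzero.elim (fun h0 => by linarith) (fun h0 => hB0 (h0 ▸ hz))
  exact (base_coeff_eq hBC hCsmul hB0 hbase (by positivity) hq he hd (hbc.trans h)).symm

end Base

section BaseNorm

variable {V : Type*} [NormedAddCommGroup V] [NormedSpace ℝ V] {C B : Set V}

theorem norm_eq_one_of_mem_base (hBC : B ⊆ C) (hCsmul : ∀ x ∈ C, ∀ r : ℝ, 0 ≤ r → r • x ∈ C)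
    (hBconv : Convex ℝ B) (hB0 : (0 : V) ∉ B)
    (hbase : ∀ u ∈ C, u ≠ 0 → ∃! kb : ℝ × V, 0 < kb.1 ∧ kb.2 ∈ B ∧ u = kb.1 • kb.2)
    (hnorm : ∀ v : V, ‖v‖ = gauge (convexHull ℝ (B ∪ -B)) v) {b : V} (hb : b ∈ B) :
    ‖b‖ = 1 := by
  have hb₁ : b ∈ (1 : ℝ) • convexHull ℝ (B ∪ -B) := by
    rw [one_smul]
    exact subset_convexHull ℝ _ (Or.inl hb)
  rw [hnorm]
  refine le_antisymm (gauge_le_of_mem zero_le_one hb₁) (le_csInf ⟨1, one_pos, hb₁⟩ ?_)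
  rintro r ⟨hr, x, hx, hbx⟩
  obtain ⟨c₁, hc₁, c₂, hc₂, t, s, ht, hs, hts, rfl⟩ := hBconv.mem_convexHull_union_neg hx
  have hcoeff : r * t = 1 + r * s :=
    base_coeff_add hBC hCsmul hBconv hB0 hbase one_pos (by positivity) hb hc₂ hc₁
      (by rw [← hbx]; module)
  nlinarith

theorem norm_smul_of_mem_base (hnormB : ∀ b ∈ B, ‖b‖ = 1) {a : ℝ} (ha : 0 ≤ a) {b : V}
    (hb : b ∈ B) : ‖a • b‖ = a := by
  rw [norm_smul, hnormB b hb, Real.norm_of_nonneg ha, mul_one]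

theorem norm_add_of_mem_cone (hBconv : Convex ℝ B) (hnormB : ∀ b ∈ B, ‖b‖ = 1)
    (hbase : ∀ u ∈ C, u ≠ 0 → ∃! kb : ℝ × V, 0 < kb.1 ∧ kb.2 ∈ B ∧ u = kb.1 • kb.2)
    {x y : V} (hx : x ∈ C) (hy : y ∈ C) : ‖x + y‖ = ‖x‖ + ‖y‖ := by
  rcases eq_or_ne x 0 with rfl | hx₀
  · simp
  rcases eq_or_ne y 0 with rfl | hy₀
  · simp
  obtain ⟨⟨a, b⟩, ⟨ha, hb, rfl⟩, -⟩ := hbase x hx hx₀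
  obtain ⟨⟨p, c⟩, ⟨hp, hc, rfl⟩, -⟩ := hbase y hy hy₀
  obtain ⟨d, hd, hsum⟩ := hBconv.exists_smul_eq_smul_add_smul ha.le hp.le hb hc
  rw [← hsum, norm_smul_of_mem_base hnormB (by positivity) hd, norm_smul_of_mem_base hnormB ha.le hb,
    norm_smul_of_mem_base hnormB hp.le hc]

theorem le_norm_of_le_one_on_base (hnorm : ∀ v : V, ‖v‖ = gauge (convexHull ℝ (B ∪ -B)) v)
    (g : V →L[ℝ] ℝ) (hg : ∀ x ∈ B ∪ -B, g x ≤ 1) (v : V) : g v ≤ ‖v‖ := by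
  rcases eq_or_ne v 0 with rfl | hv
  · simp
  have hK : ∀ x ∈ convexHull ℝ (B ∪ -B), g x ≤ 1 :=
    convexHull_min hg (convex_halfSpace_le g.isLinear 1)
  rw [hnorm]
  refine le_csInf ?_ ?_
  · by_contra hempty
    rw [Set.not_nonempty_iff_eq_empty] at hempty
    exact hv (norm_eq_zero.mp ((hnorm v).trans (by rw [gauge, hempty, Real.sInf_empty])))
  · rintro r ⟨hr, x, hx, rfl⟩
    simpa only [map_smul, smul_eq_mul, mul_one] using mul_le_mul_of_nonneg_left (hK x hx) hr.le

theorem sub_le_one_of_mem_base (hnormB : ∀ b ∈ B, ‖b‖ = 1) {f₁ f₂ : V →L[ℝ] ℝ}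
    (hf₁ : ‖f₁‖ ≤ 1) (hf₂pos : ∀ b ∈ B, 0 ≤ f₂ b) {b : V} (hb : b ∈ B) : f₁ b - f₂ b ≤ 1 := by
  have : f₁ b ≤ 1 := calc
    f₁ b ≤ ‖f₁‖ * ‖b‖ := (le_abs_self _).trans (f₁.le_opNorm b)
    _ ≤ 1 := by rw [hnormB b hb, mul_one]; exact hf₁
  linarith [hf₂pos b hb]

end BaseNorm

theorem stmt18_general {V : Type*} [NormedAddCommGroup V] [NormedSpace ℝ V] (C : Set V) (B : Set V)
    -- `C` is a norm-closed, proper, generating cone: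
    (hCsmul : ∀ x ∈ C, ∀ r : ℝ, 0 ≤ r → r • x ∈ C)
    -- `B` is a base for `C`:
    (hBC : B ⊆ C) (hBconv : Convex ℝ B) (hB0 : (0 : V) ∉ B)
    (hbase : ∀ u ∈ C, u ≠ 0 → ∃! kb : ℝ × V, 0 < kb.1 ∧ kb.2 ∈ B ∧ u = kb.1 • kb.2)
    -- the norm is the base norm, the Minkowski gauge of `conv (B ∪ -B)`:
    (hnorm : ∀ v : V,
      ‖v‖ = sInf {r : ℝ | 0 < r ∧ v ∈ r • (convexHull ℝ (B ∪ -B))})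
    (u₁ u₂ : V) (hu₁ : u₁ ∈ C) (hu₂ : u₂ ∈ C)
    (f₁ f₂ : V →L[ℝ] ℝ)
    (hf₁pos : ∀ x ∈ C, 0 ≤ f₁ x) (hf₂pos : ∀ x ∈ C, 0 ≤ f₂ x)
    (hf₁ : ‖f₁‖ = 1) (hf₂ : ‖f₂‖ = 1)
    (hs₁ : f₁ u₁ = ‖u₁‖) (hs₂ : f₂ u₂ = ‖u₂‖)
    (h₁₂ : f₁ u₂ = 0) (h₂₁ : f₂ u₁ = 0) :
    PerpOne u₁ u₂ := by
  have hnormB : ∀ b ∈ B, ‖b‖ = 1 := fun b hb =>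
    norm_eq_one_of_mem_base hBC hCsmul hBconv hB0 hbase hnorm hb
  intro k
  rcases le_or_gt 0 k with hk | hk
  · exact norm_add_of_mem_cone hBconv hnormB hbase hu₁ (hCsmul u₂ hu₂ k hk)
  have hg : ∀ x ∈ B ∪ -B, (f₁ - f₂) x ≤ 1 := by
    rintro x (hx | hx)
    · exact sub_le_one_of_mem_base hnormB hf₁.le (fun b hb => hf₂pos b (hBC hb)) hx
    · have := sub_le_one_of_mem_base hnormB hf₂.le (fun b hb => hf₁pos b (hBC hb)) hx
      simp only [sub_apply, map_neg] at this ⊢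
      linarith
  have hlower := le_norm_of_le_one_on_base hnorm (f₁ - f₂) hg (u₁ + k • u₂)
  have hval : (f₁ - f₂) (u₁ + k • u₂) = ‖u₁‖ + ‖k • u₂‖ := by
    simp only [sub_apply, map_add, map_smul, smul_eq_mul, hs₁, hs₂, h₁₂,
      h₂₁, norm_smul, Real.norm_of_nonpos hk.le]
    ring
  exact le_antisymm (norm_add_le _ _) (hval ▸ hlower)

theorem stmt18 {V : Type*} [NormedAddCommGroup V] [NormedSpace ℝ V] (C : Set V) (B : Set V)
    -- `C` is a norm-closed, proper, generating cone:
    (hCadd : ∀ x ∈ C, ∀ y ∈ C, x + y ∈ C)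
    (hCsmul : ∀ x ∈ C, ∀ r : ℝ, 0 ≤ r → r • x ∈ C)
    (hCproper : ∀ x, x ∈ C → -x ∈ C → x = 0)
    (hCgen : ∀ x : V, ∃ y ∈ C, ∃ z ∈ C, x = y - z)
    (hCclosed : IsClosed C)
    -- `B` is a base for `C`:
    (hBC : B ⊆ C) (hBconv : Convex ℝ B) (hB0 : (0 : V) ∉ B)
    (hbase : ∀ u ∈ C, u ≠ 0 → ∃! kb : ℝ × V, 0 < kb.1 ∧ kb.2 ∈ B ∧ u = kb.1 • kb.2)
    -- the norm is the base norm, the Minkowski gauge of `conv (B ∪ -B)`: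
    (hnorm : ∀ v : V,
      ‖v‖ = sInf {r : ℝ | 0 < r ∧ v ∈ r • (convexHull ℝ (B ∪ -B))})
    (u₁ u₂ : V) (hu₁ : u₁ ∈ C) (hu₂ : u₂ ∈ C) (hn₁ : u₁ ≠ 0) (hn₂ : u₂ ≠ 0)
    (f₁ f₂ : V →L[ℝ] ℝ)
    (hf₁pos : ∀ x ∈ C, 0 ≤ f₁ x) (hf₂pos : ∀ x ∈ C, 0 ≤ f₂ x)
    (hf₁ : ‖f₁‖ = 1) (hf₂ : ‖f₂‖ = 1)
    (hs₁ : f₁ u₁ = ‖u₁‖) (hs₂ : f₂ u₂ = ‖u₂‖)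
    (h₁₂ : f₁ u₂ = 0) (h₂₁ : f₂ u₁ = 0) :
    PerpOne u₁ u₂ :=
  stmt18_general C B hCsmul hBC hBconv hB0 hbase hnorm u₁ u₂ hu₁ hu₂ f₁ f₂ hf₁pos hf₂pos hf₁ hf₂ hs₁
    hs₂ h₁₂ h₂₁
end
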